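/- arXiv:1506.04225 — 2 statements merged into one kernel-verified Lean document; each statement's English description precedes it below -/
import Mathlib

section
/- For every natural number k there exists a 3-critical graph J_k with exactly 8k + 9 vertices and 11k + 12 edges; consequently there is an infinite sequence of 3-critical graphs whose average degrees approach 2 + 3/4 from below. -/
/-- A proper edge coloring of `G` with `n` colors: edges sharing an endpoint
get distinct colors. -/
def EdgeColorable {V : Type*} (G : SimpleGraph V) (n : ℕ) : Prop :=
  ∃ C : G.edgeSet → Fin n, ∀ e₁ e₂ : G.edgeSet, e₁ ≠ e₂ →
    (∃ v, v ∈ (e₁ : Sym2 V) ∧ v ∈ (e₂ : Sym2 V)) → C e₁ ≠ C e₂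

/-- The chromatic index (edge chromatic number) of `G`. -/
noncomputable def chromIndex {V : Type*} (G : SimpleGraph V) : ℕ :=
  sInf {n | EdgeColorable G n}

/-- The degree of a vertex. -/
noncomputable def deg {V : Type*} (G : SimpleGraph V) (v : V) : ℕ :=
  (G.neighborSet v).ncard

/-- A graph with maximum degree `k` is `k`-critical if `χ'(G) = k + 1` and
`χ'(G - e) = k` for every edge `e`. -/
def IsCritical {V : Type*} (k : ℕ) (G : SimpleGraph V) : Prop :=
  (∀ v, deg G v ≤ k) ∧ (∃ v, deg G v = k) ∧
  chromIndex G = k + 1 ∧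
  ∀ e ∈ G.edgeSet, chromIndex (G.deleteEdges {e}) = k

/-- The Hajós join of `G₁` and `G₂` along edges `v₁v₂` and `v₃v₄`: delete the
two edges, identify `v₁` with `v₃`, and add the edge `v₂v₄`. -/
def hajosJoin {V₁ V₂ : Type*} (G₁ : SimpleGraph V₁) (G₂ : SimpleGraph V₂)
    (v₁ v₂ : V₁) (v₃ v₄ : V₂) :
    SimpleGraph (V₁ ⊕ {x : V₂ // x ≠ v₃}) :=
  SimpleGraph.fromRel fun a b =>
    match a, b with
    | Sum.inl x, Sum.inl y => G₁.Adj x y ∧ s(x, y) ≠ s(v₁, v₂)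
    | Sum.inl x, Sum.inr y => (x = v₁ ∧ G₂.Adj v₃ y.1 ∧ y.1 ≠ v₄) ∨ (x = v₂ ∧ y.1 = v₄)
    | Sum.inr _, Sum.inl _ => False
    | Sum.inr x, Sum.inr y => G₂.Adj x.1 y.1 ∧ s(x.1, y.1) ≠ s(v₃, v₄)

/-- `G` is a Hajós join of `G₁` and `G₂`. -/
def IsHajosJoin {W V₁ V₂ : Type*} (G : SimpleGraph W)
    (G₁ : SimpleGraph V₁) (G₂ : SimpleGraph V₂) : Prop :=
  ∃ (v₁ v₂ : V₁) (v₃ v₄ : V₂), G₁.Adj v₁ v₂ ∧ G₂.Adj v₃ v₄ ∧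
    Nonempty (G ≃g hajosJoin G₁ G₂ v₁ v₂ v₃ v₄)

/-- Vertices of the Petersen graph: 2-element subsets of a 5-element set. -/
abbrev KVert : Type := {s : Finset (Fin 5) // s.card = 2}

/-- The Petersen graph, as the Kneser graph K(5,2). -/
def Petersen : SimpleGraph KVert where
  Adj a b := Disjoint a.1 b.1
  symm := ⟨fun a b h => h.symm⟩
  loopless := ⟨fun a h => by
    have h2 := a.2
    have h' : (a.1 : Finset (Fin 5)) = ∅ := disjoint_self.mp h
    rw [h'] at h2
    simp at h2⟩

/-- A fixed vertex of the Petersen graph. -/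
def pstarV : KVert := ⟨{0, 1}, by decide⟩

/-- The vertex set of the Petersen graph minus one vertex. -/
abbrev PV : Type := {x : KVert // x ≠ pstarV}

/-- `P*`: the Petersen graph with one vertex deleted. -/
def PStar : SimpleGraph PV where
  Adj a b := Petersen.Adj a.1 b.1
  symm := ⟨fun a b h => Petersen.adj_symm h⟩
  loopless := ⟨fun a h => Petersen.irrefl h⟩

/-!
`J₀ = P*`, and `J (k + 1)` is the Hajós join of `J k` with a new copy of `P*`, taken along the
edge `A B` of the last copy of `P*` in `J k` and the edge `pC pD` of the new copy, where `A` and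
`pC` have degree 2; each step adds 8 vertices and 11 edges.

A 3-edge-colouring of a Hajós join, with the colour of the new edge `v₂ v₄` given back to `v₁ v₂`
or to `v₃ v₄`, colours one of the two factors; since `P*` is not 3-edge-colourable, no `J k` is.
Conversely, when an edge is deleted from the join, 3-edge-colourings of the two factors with an
edge deleted glue together after permuting the colours of one factor: because the identified
vertices have degree 2 and `v₂`, `v₄` degree at most 3, the permutation can separate the colours
at the identified vertex and free a colour for `v₂ v₄`. The facts about `P*` itself are checked
by an exhaustive search.
-/

open SimpleGraph

section ProperColoring

variable {V W α : Type*}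

-- Edge colourings are total functions on `Sym2 V` that are proper on a given set of edges, so
-- that colourings of different graphs can be restricted, extended and glued.
def IsProperOn (c : Sym2 V → α) (S : Set (Sym2 V)) : Prop :=
  ∀ ⦃e⦄, e ∈ S → ∀ ⦃f⦄, f ∈ S → e ≠ f → (∃ v, v ∈ e ∧ v ∈ f) → c e ≠ c f

namespace IsProperOn

variable {c : Sym2 V → α} {S T : Set (Sym2 V)}

theorem mono (h : IsProperOn c S) (hTS : T ⊆ S) : IsProperOn c T :=
  fun _ he _ hf => h (hTS he) (hTS hf)

theorem comp {β : Type*} (h : IsProperOn c S) {π : α → β} (hπ : π.Injective) :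
    IsProperOn (π ∘ c) S :=
  fun _ he _ hf hef hv => hπ.ne (h he hf hef hv)

theorem union (hS : IsProperOn c S) (hT : IsProperOn c T)
    (hST : ∀ e ∈ S, ∀ f ∈ T, (∃ v, v ∈ e ∧ v ∈ f) → c e ≠ c f) : IsProperOn c (S ∪ T) := by
  rintro e (he | he) f (hf | hf) hef hv
  · exact hS he hf hef hv
  · exact hST e he f hf hv
  · obtain ⟨v, hve, hvf⟩ := hv
    exact (hST f hf e he ⟨v, hvf, hve⟩).symm
  · exact hT he hf hef hv

theorem update_insert [DecidableEq V] (h : IsProperOn c S) {e : Sym2 V} {a : α}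
    (ha : ∀ f ∈ S, f ≠ e → (∃ v, v ∈ e ∧ v ∈ f) → c f ≠ a) :
    IsProperOn (Function.update c e a) (insert e S) := by
  rintro x hx y hy hxy ⟨v, hvx, hvy⟩
  rcases eq_or_ne x e with rfl | hxe
  · rw [Function.update_self, Function.update_of_ne hxy.symm]
    exact (ha y (hy.resolve_left hxy.symm) hxy.symm ⟨v, hvx, hvy⟩).symm
  rcases eq_or_ne y e with rfl | hye
  · rw [Function.update_self, Function.update_of_ne hxy]
    exact ha x (hx.resolve_left hxy) hxy ⟨v, hvy, hvx⟩
  rw [Function.update_of_ne hxe, Function.update_of_ne hye]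
  exact h (hx.resolve_left hxe) (hy.resolve_left hye) hxy ⟨v, hvx, hvy⟩

theorem image {f : V → W} (hf : f.Injective) (h : IsProperOn c S) {c' : Sym2 W → α}
    (hc : ∀ e ∈ S, c' (e.map f) = c e) : IsProperOn c' (Sym2.map f '' S) := by
  rintro _ ⟨e, he, rfl⟩ _ ⟨e', he', rfl⟩ hne ⟨w, hw, hw'⟩
  obtain ⟨u, hu, rfl⟩ := Sym2.mem_map.1 hw
  obtain ⟨u', hu', hfu⟩ := Sym2.mem_map.1 hw'
  rw [hc e he, hc e' he']
  exact h he he' (fun h' => hne (h' ▸ rfl)) ⟨u, hu, hf hfu ▸ hu'⟩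

theorem comp_map {f : V → W} (hf : f.Injective) {c : Sym2 W → α}
    (h : IsProperOn c (Sym2.map f '' S)) : IsProperOn (c ∘ Sym2.map f) S :=
  fun e he e' he' hne ⟨u, hu, hu'⟩ =>
    h ⟨e, he, rfl⟩ ⟨e', he', rfl⟩ ((Sym2.map.injective hf).ne hne)
      ⟨f u, Sym2.mem_map.2 ⟨u, hu, rfl⟩, Sym2.mem_map.2 ⟨u, hu', rfl⟩⟩

end IsProperOn

variable {G : SimpleGraph V} {n : ℕ}

theorem edgeColorable_iff_exists_isProperOn [NeZero n] :
    EdgeColorable G n ↔ ∃ c : Sym2 V → Fin n, IsProperOn c G.edgeSet := by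
  classical
  constructor
  · rintro ⟨C, hC⟩
    refine ⟨fun e => if he : e ∈ G.edgeSet then C ⟨e, he⟩ else 0, fun e he f hf hef hv => ?_⟩
    simp only [dif_pos he, dif_pos hf]
    exact hC _ _ (fun h => hef (congrArg Subtype.val h)) hv
  · rintro ⟨c, hc⟩
    exact ⟨fun e => c e, fun e f hef hv => hc e.2 f.2 (Subtype.coe_ne_coe.2 hef) hv⟩

theorem EdgeColorable.mono {m : ℕ} (h : EdgeColorable G m) (hmn : m ≤ n) :
    EdgeColorable G n := by
  obtain ⟨C, hC⟩ := h
  exact ⟨fun e => Fin.castLE hmn (C e), fun e f hef hv =>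
    (Fin.castLE_injective hmn).ne (hC e f hef hv)⟩

theorem EdgeColorable.of_deleteEdges [NeZero n] {e : Sym2 V}
    (h : EdgeColorable (G.deleteEdges {e}) n) : EdgeColorable G (n + 1) := by
  classical
  obtain ⟨c, hc⟩ := edgeColorable_iff_exists_isProperOn.1 h
  rw [edgeSet_deleteEdges] at hc
  refine edgeColorable_iff_exists_isProperOn.2
    ⟨Function.update (Fin.castSucc ∘ c) e (Fin.last n), ?_⟩
  refine ((hc.comp (Fin.castSucc_injective n)).update_insert
    fun _ _ _ _ => Fin.castSucc_ne_last _).mono ?_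
  rw [Set.insert_sdiff_singleton]
  exact Set.subset_insert e _

theorem chromIndex_eq_succ (h : EdgeColorable G (n + 1)) (h' : ¬ EdgeColorable G n) :
    chromIndex G = n + 1 := by
  refine le_antisymm (Nat.sInf_le h) (le_csInf ⟨_, h⟩ fun m hm => ?_)
  by_contra! hlt
  exact h' (EdgeColorable.mono hm (by omega))

theorem deg_le_of_edgeColorable (h : EdgeColorable G n) (v : V) : deg G v ≤ n := by
  obtain ⟨C, hC⟩ := h
  have hinj : Function.Injective fun u : G.neighborSet v => C ⟨s(v, u), u.2⟩ := by
    intro u u' huu'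
    by_contra hne
    refine hC _ _ (fun h => hne ?_) ⟨v, Sym2.mem_mk_left _ _, Sym2.mem_mk_left _ _⟩ huu'
    exact Subtype.ext (Sym2.congr_right.1 (congrArg Subtype.val h))
  simpa [deg] using Nat.card_le_card_of_injective _ hinj

theorem deg_deleteEdges_of_notMem {e : Sym2 V} {v : V} (hv : v ∉ e) :
    deg (G.deleteEdges {e}) v = deg G v := by
  unfold deg
  congr 1
  ext u
  simp only [mem_neighborSet, deleteEdges_adj, Set.mem_singleton_iff, and_iff_left_iff_imp]
  rintro - rfl
  exact hv (Sym2.mem_mk_left _ _)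

theorem deg_eq_ncard_incidenceSet (v : V) : deg G v = (G.incidenceSet v).ncard := by
  classical
  exact (Nat.card_congr (G.incidenceSetEquivNeighborSet v)).symm

theorem ncard_incident_add_one_le_deg [Finite V] {e : Sym2 V} {v : V} (he : e ∈ G.edgeSet)
    (hv : v ∈ e) {S : Set (Sym2 V)} (hS : S ⊆ G.edgeSet \ {e}) :
    {x ∈ S | v ∈ x}.ncard + 1 ≤ deg G v := by
  rw [deg_eq_ncard_incidenceSet, ← Set.ncard_insert_of_notMem fun h => (hS h.1).2 rfl]
  refine Set.ncard_le_ncard ?_ (Set.toFinite _)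
  rintro x (rfl | ⟨hxS, hvx⟩)
  · exact ⟨he, hv⟩
  · exact ⟨(hS hxS).1, hvx⟩

theorem deg_le_of_edgeColorable_deleteEdges {e : Sym2 V} {v : V} (hv : v ∉ e)
    (h : EdgeColorable (G.deleteEdges {e}) n) : deg G v ≤ n :=
  deg_deleteEdges_of_notMem hv ▸ deg_le_of_edgeColorable h v

theorem isCritical_of [NeZero n] (hdeg : ∀ v, deg G v ≤ n + 1) {v₀ : V}
    (hv₀ : deg G v₀ = n + 1) (hG : ¬ EdgeColorable G (n + 1))
    (hdel : ∀ e ∈ G.edgeSet, EdgeColorable (G.deleteEdges {e}) (n + 1)) :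
    IsCritical (n + 1) G := by
  obtain ⟨u, hu⟩ := Set.nonempty_of_ncard_ne_zero (s := G.neighborSet v₀) <| by
    unfold deg at hv₀
    omega
  refine ⟨hdeg, ⟨v₀, hv₀⟩, chromIndex_eq_succ (hdel s(v₀, u) hu).of_deleteEdges hG,
    fun e he => ?_⟩
  exact chromIndex_eq_succ (hdel e he) fun h => hG h.of_deleteEdges

end ProperColoring

section Transport

variable {V W : Type*} {G : SimpleGraph V} {G' : SimpleGraph W}

theorem deg_iso (φ : G ≃g G') (v : V) : deg G' (φ v) = deg G v :=
  (Nat.card_congr (φ.mapNeighborSet v)).symm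

theorem EdgeColorable.of_iso {n : ℕ} (φ : G ≃g G') (h : EdgeColorable G n) :
    EdgeColorable G' n := by
  obtain ⟨C, hC⟩ := h
  have hmem : ∀ (e : G'.edgeSet) (v : W), v ∈ (e : Sym2 W) →
      φ.symm v ∈ (φ.mapEdgeSet.symm e : Sym2 V) := fun e v hv =>
    Sym2.mem_map.2 ⟨v, hv, rfl⟩
  exact ⟨fun e => C (φ.mapEdgeSet.symm e), fun e₁ e₂ hne ⟨v, hv₁, hv₂⟩ =>
    hC _ _ (φ.mapEdgeSet.symm.injective.ne hne) ⟨φ.symm v, hmem e₁ v hv₁, hmem e₂ v hv₂⟩⟩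

theorem chromIndex_iso (φ : G ≃g G') : chromIndex G' = chromIndex G := by
  unfold chromIndex
  congr 1
  ext n
  exact ⟨EdgeColorable.of_iso φ.symm, EdgeColorable.of_iso φ⟩

def SimpleGraph.Iso.deleteEdges (φ : G ≃g G') (e : Sym2 V) :
    G.deleteEdges {e} ≃g G'.deleteEdges {e.map φ} where
  __ := φ.toEquiv
  map_rel_iff' {a b} := by
    simp only [deleteEdges_adj, Set.mem_singleton_iff]
    change G'.Adj (φ a) (φ b) ∧ ¬ s(φ a, φ b) = e.map φ ↔ _
    rw [φ.map_adj_iff, ← Sym2.map_mk, (Sym2.map.injective φ.injective).eq_iff]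

theorem IsCritical.of_iso {k : ℕ} (φ : G ≃g G') (h : IsCritical k G) : IsCritical k G' := by
  obtain ⟨hdeg, ⟨v₀, hv₀⟩, hχ, hdel⟩ := h
  refine ⟨fun w => ?_, ⟨φ v₀, (deg_iso φ v₀).trans hv₀⟩, (chromIndex_iso φ).trans hχ,
    fun e he => ?_⟩
  · rw [← φ.apply_symm_apply w, deg_iso]
    exact hdeg _
  · have he' : e.map φ.symm ∈ G.edgeSet := φ.symm.map_mem_edgeSet_iff.2 he
    rw [← hdel _ he', ← chromIndex_iso (Iso.deleteEdges φ _), Sym2.map_map]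
    simp

theorem ncard_edgeSet_iso (φ : G ≃g G') : G'.edgeSet.ncard = G.edgeSet.ncard :=
  (Nat.card_congr φ.mapEdgeSet).symm

end Transport

section ColourChoice

variable {ι β : Type*} [Finite ι] {s : Set ι}

theorem exists_forall_eq_of_ncard_le_one [Nonempty β] (hs : s.ncard ≤ 1) (f : ι → β) :
    ∃ b, ∀ x ∈ s, f x = b := by
  rcases (Set.ncard_le_one_iff_eq (Set.toFinite s)).1 hs with rfl | ⟨x, rfl⟩
  · exact ⟨Classical.arbitrary β, by simp⟩
  · exact ⟨f x, by simp⟩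

theorem exists_ne_forall_eq_of_ncard_le_one [Nontrivial β] (hs : s.ncard ≤ 1) {f : ι → β}
    {a : β} (hfa : ∀ x ∈ s, f x ≠ a) : ∃ b ≠ a, ∀ x ∈ s, f x = b := by
  rcases (Set.ncard_le_one_iff_eq (Set.toFinite s)).1 hs with rfl | ⟨x, rfl⟩
  · obtain ⟨b, hb⟩ := exists_ne a
    exact ⟨b, hb, by simp⟩
  · exact ⟨f x, hfa x rfl, by simp⟩

theorem exists_forall_ne_of_ncard_lt {n : ℕ} (hs : s.ncard < n) (f : ι → Fin n) :
    ∃ b, ∀ x ∈ s, f x ≠ b := by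
  by_contra! h
  have hsub : (Set.univ : Set (Fin n)) ⊆ f '' s := fun b _ => h b
  have := (Set.ncard_le_ncard hsub (Set.toFinite _)).trans (Set.ncard_image_le (Set.toFinite s))
  rw [Set.ncard_univ, Nat.card_eq_fintype_card, Fintype.card_fin] at this
  omega

theorem exists_perm_fin_three (α₀ α β γ : Fin 3) (h : α ≠ α₀) :
    ∃ π : Equiv.Perm (Fin 3), π β = α ∧ π γ ≠ α₀ := by
  revert α₀ α β γ
  decide

variable {V V' : Type*} [Finite V] [Finite V'] {G : SimpleGraph V} {G' : SimpleGraph V'}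
  {m b : V} {m' b' : V'}

theorem exists_perm_of_isProperOn_deleteEdges (hmb : G.Adj m b) (hmb' : G'.Adj m' b')
    (hm : deg G m ≤ 2) (hm' : deg G' m' ≤ 2) (hb' : deg G' b' ≤ 3) {e : Sym2 V}
    (he : s(m, b) ≠ e) {c : Sym2 V → Fin 3} (hc : IsProperOn c (G.edgeSet \ {e}))
    (d : Sym2 V' → Fin 3) :
    ∃ π : Equiv.Perm (Fin 3),
      (∀ x ∈ (G.edgeSet \ {e}) \ {s(m, b)}, m ∈ x →
        ∀ y ∈ G'.edgeSet \ {s(m', b')}, m' ∈ y → c x ≠ π (d y)) ∧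
      (∀ y ∈ G'.edgeSet \ {s(m', b')}, b' ∈ y → π (d y) ≠ c s(m, b)) := by
  -- `π` sends a colour missing at `b'` to the colour of `m b`, and keeps the colour of the only
  -- other edge at `m'` away from that of the only other edge at `m`.
  have hmbE : s(m, b) ∈ G.edgeSet \ {e} := ⟨hmb, he⟩
  have hX := ncard_incident_add_one_le_deg hmb (Sym2.mem_mk_left m b)
    (S := (G.edgeSet \ {e}) \ {s(m, b)}) fun x hx => ⟨hx.1.1, hx.2⟩
  have hY := ncard_incident_add_one_le_deg hmb' (Sym2.mem_mk_left m' b') subset_rfl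
  have hZ := ncard_incident_add_one_le_deg hmb' (Sym2.mem_mk_right m' b') subset_rfl
  obtain ⟨α₀, hα₀, hcα₀⟩ := exists_ne_forall_eq_of_ncard_le_one
    (s := {x ∈ (G.edgeSet \ {e}) \ {s(m, b)} | m ∈ x}) (by omega) (f := c)
    fun x ⟨hx, hmx⟩ => hc hx.1 hmbE hx.2 ⟨m, hmx, Sym2.mem_mk_left _ _⟩
  obtain ⟨γ, hdγ⟩ := exists_forall_eq_of_ncard_le_one
    (s := {y ∈ G'.edgeSet \ {s(m', b')} | m' ∈ y}) (by omega) d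
  obtain ⟨β, hdβ⟩ := exists_forall_ne_of_ncard_lt
    (s := {y ∈ G'.edgeSet \ {s(m', b')} | b' ∈ y}) (by omega) d
  obtain ⟨π, hπβ, hπγ⟩ := exists_perm_fin_three α₀ (c s(m, b)) β γ hα₀.symm
  refine ⟨π, fun x hx hmx y hy hmy => ?_, fun y hy hby => ?_⟩
  · rw [hcα₀ x ⟨hx, hmx⟩, hdγ y ⟨hy, hmy⟩]
    exact hπγ.symm
  · rw [← hπβ]
    exact π.injective.ne (hdβ y ⟨hy, hby⟩)

theorem exists_perm_separating (hmb : G.Adj m b) (hmb' : G'.Adj m' b') (hm : deg G m ≤ 2)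
    (hm' : deg G' m' ≤ 2) (c : Sym2 V → Fin 3) (d : Sym2 V' → Fin 3) :
    ∃ π : Equiv.Perm (Fin 3), ∀ x ∈ G.edgeSet \ {s(m, b)}, m ∈ x →
      ∀ y ∈ G'.edgeSet \ {s(m', b')}, m' ∈ y → c x ≠ π (d y) := by
  have hX := ncard_incident_add_one_le_deg hmb (Sym2.mem_mk_left m b) subset_rfl
  have hY := ncard_incident_add_one_le_deg hmb' (Sym2.mem_mk_left m' b') subset_rfl
  obtain ⟨α₀, hcα₀⟩ := exists_forall_eq_of_ncard_le_one
    (s := {x ∈ G.edgeSet \ {s(m, b)} | m ∈ x}) (by omega) c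
  obtain ⟨γ, hdγ⟩ := exists_forall_eq_of_ncard_le_one
    (s := {y ∈ G'.edgeSet \ {s(m', b')} | m' ∈ y}) (by omega) d
  obtain ⟨α, hα⟩ := exists_ne α₀
  obtain ⟨π, hπγ, -⟩ := exists_perm_fin_three α₀ α γ γ hα
  refine ⟨π, fun x hx hmx y hy hmy => ?_⟩
  rw [hcα₀ x ⟨hx, hmx⟩, hdγ y ⟨hy, hmy⟩, hπγ]
  exact hα.symm

end ColourChoice

section HajosJoin

variable {V₁ V₂ α : Type*} {G₁ : SimpleGraph V₁} {G₂ : SimpleGraph V₂} {v₁ v₂ : V₁} {v₃ v₄ : V₂}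

open Classical in
noncomputable def hajosIncl (v₁ : V₁) (v₃ : V₂) (y : V₂) : V₁ ⊕ {x : V₂ // x ≠ v₃} :=
  if h : y = v₃ then .inl v₁ else .inr ⟨y, h⟩

@[simp] theorem hajosIncl_self : hajosIncl v₁ v₃ v₃ = .inl v₁ := dif_pos rfl

theorem hajosIncl_of_ne {y : V₂} (hy : y ≠ v₃) : hajosIncl v₁ v₃ y = .inr ⟨y, hy⟩ := dif_neg hy

@[simp] theorem hajosIncl_val (y : {x : V₂ // x ≠ v₃}) : hajosIncl v₁ v₃ y = .inr y :=
  dif_neg y.2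

theorem hajosIncl_eq_inl_iff {y : V₂} {x : V₁} : hajosIncl v₁ v₃ y = .inl x ↔ y = v₃ ∧ v₁ = x := by
  by_cases hy : y = v₃
  · subst hy
    simp
  · simp [hajosIncl_of_ne hy, hy]

theorem hajosIncl_eq_inr_iff {y : V₂} {z : {x : V₂ // x ≠ v₃}} :
    hajosIncl v₁ v₃ y = .inr z ↔ y = z.1 := by
  by_cases hy : y = v₃
  · subst hy
    simp [z.2.symm]
  · simp [hajosIncl_of_ne hy, Subtype.ext_iff]

theorem hajosIncl_injective : (hajosIncl v₁ v₃).Injective := by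
  intro y z h
  by_cases hy : y = v₃ <;> by_cases hz : z = v₃
  · rw [hy, hz]
  · rw [hy, hajosIncl_self, hajosIncl_of_ne hz] at h
    cases h
  · rw [hz, hajosIncl_self, hajosIncl_of_ne hy] at h
    cases h
  · rw [hajosIncl_of_ne hy, hajosIncl_of_ne hz] at h
    exact congrArg Subtype.val (Sum.inr_injective h)

@[simp] theorem hajosJoin_adj_inl_inl {x y : V₁} :
    (hajosJoin G₁ G₂ v₁ v₂ v₃ v₄).Adj (.inl x) (.inl y) ↔ G₁.Adj x y ∧ s(x, y) ≠ s(v₁, v₂) := by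
  simp only [hajosJoin, fromRel_adj, ne_eq, Sum.inl.injEq]
  constructor
  · rintro ⟨-, h | ⟨h, h'⟩⟩
    · exact h
    · exact ⟨h.symm, by rwa [Sym2.eq_swap]⟩
  · rintro ⟨h, h'⟩
    exact ⟨h.ne, Or.inl ⟨h, h'⟩⟩

@[simp] theorem hajosJoin_adj_inl_inr {x : V₁} {y : {x : V₂ // x ≠ v₃}} :
    (hajosJoin G₁ G₂ v₁ v₂ v₃ v₄).Adj (.inl x) (.inr y) ↔
      (x = v₁ ∧ G₂.Adj v₃ y ∧ y.1 ≠ v₄) ∨ (x = v₂ ∧ y.1 = v₄) := by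
  simp [hajosJoin]

@[simp] theorem hajosJoin_adj_inr_inr {x y : {x : V₂ // x ≠ v₃}} :
    (hajosJoin G₁ G₂ v₁ v₂ v₃ v₄).Adj (.inr x) (.inr y) ↔
      G₂.Adj x y ∧ s(x.1, y.1) ≠ s(v₃, v₄) := by
  simp only [hajosJoin, fromRel_adj, ne_eq, Sum.inr.injEq]
  constructor
  · rintro ⟨-, h | ⟨h, h'⟩⟩
    · exact h
    · exact ⟨h.symm, by rwa [Sym2.eq_swap]⟩
  · rintro ⟨h, h'⟩
    exact ⟨fun hxy => h.ne (congrArg Subtype.val hxy), Or.inl ⟨h, h'⟩⟩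

theorem inr_notMem_map_inl (y : {x : V₂ // x ≠ v₃}) (e : Sym2 V₁) :
    (Sum.inr y : V₁ ⊕ {x : V₂ // x ≠ v₃}) ∉ e.map Sum.inl := by
  simp [Sym2.mem_map]

theorem exists_inr_mem_map_hajosIncl {f : Sym2 V₂} (hf : ¬ f.IsDiag) :
    ∃ y, Sum.inr y ∈ f.map (hajosIncl v₁ v₃) := by
  induction f using Sym2.ind with
  | _ a b =>
    rw [Sym2.mk_isDiag_iff] at hf
    by_cases ha : a = v₃
    · exact ⟨⟨b, ha ▸ Ne.symm hf⟩, Sym2.mem_map.2 ⟨b, Sym2.mem_mk_right a b, hajosIncl_of_ne _⟩⟩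
    · exact ⟨⟨a, ha⟩, Sym2.mem_map.2 ⟨a, Sym2.mem_mk_left a b, hajosIncl_of_ne _⟩⟩

theorem map_inl_ne_map_hajosIncl (e : Sym2 V₁) {f : Sym2 V₂} (hf : ¬ f.IsDiag) :
    e.map Sum.inl ≠ f.map (hajosIncl v₁ v₃) := by
  intro h
  obtain ⟨y, hy⟩ := exists_inr_mem_map_hajosIncl (v₁ := v₁) hf
  exact inr_notMem_map_inl y e (h ▸ hy)

theorem map_inl_ne_hajosBridge (h₃₄ : v₃ ≠ v₄) (e : Sym2 V₁) :
    e.map Sum.inl ≠ s(.inl v₂, hajosIncl v₁ v₃ v₄) := by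
  intro h
  refine inr_notMem_map_inl ⟨v₄, h₃₄.symm⟩ e ?_
  rw [h, ← hajosIncl_of_ne]
  exact Sym2.mem_mk_right _ _

theorem map_hajosIncl_ne_hajosBridge (h₁₂ : v₁ ≠ v₂) (f : Sym2 V₂) :
    f.map (hajosIncl v₁ v₃) ≠ s(.inl v₂, hajosIncl v₁ v₃ v₄) := by
  intro h
  obtain ⟨y, -, hy⟩ := Sym2.mem_map.1 (h ▸ Sym2.mem_mk_left _ _ :
    (Sum.inl v₂ : V₁ ⊕ {x : V₂ // x ≠ v₃}) ∈ f.map (hajosIncl v₁ v₃))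
  exact h₁₂ (hajosIncl_eq_inl_iff.1 hy).2

theorem hajosBridge_mem_edgeSet (h₃₄ : v₃ ≠ v₄) :
    s(.inl v₂, hajosIncl v₁ v₃ v₄) ∈ (hajosJoin G₁ G₂ v₁ v₂ v₃ v₄).edgeSet := by
  rw [hajosIncl_of_ne h₃₄.symm]
  exact (mem_edgeSet _).2 (hajosJoin_adj_inl_inr.2 (Or.inr ⟨rfl, rfl⟩))

theorem map_inl_mem_edgeSet_hajosJoin {e : Sym2 V₁} (he : e ∈ G₁.edgeSet \ {s(v₁, v₂)}) :
    e.map Sum.inl ∈ (hajosJoin G₁ G₂ v₁ v₂ v₃ v₄).edgeSet := by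
  induction e using Sym2.ind with
  | _ x y => exact (mem_edgeSet _).2 (hajosJoin_adj_inl_inl.2 he)

theorem map_hajosIncl_mem_edgeSet_hajosJoin {f : Sym2 V₂} (hf : f ∈ G₂.edgeSet \ {s(v₃, v₄)}) :
    f.map (hajosIncl v₁ v₃) ∈ (hajosJoin G₁ G₂ v₁ v₂ v₃ v₄).edgeSet := by
  induction f using Sym2.ind with
  | _ y z =>
    obtain ⟨hyz, hne⟩ := hf
    have hne' : s(y, z) ≠ s(v₃, v₄) := hne
    rw [Sym2.map_mk]
    by_cases hy : y = v₃
    · subst hy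
      rw [hajosIncl_self, hajosIncl_of_ne hyz.ne.symm]
      exact (mem_edgeSet _).2
        (hajosJoin_adj_inl_inr.2 (Or.inl ⟨rfl, hyz, fun h => hne' (Sym2.congr_right.2 h)⟩))
    by_cases hz : z = v₃
    · subst hz
      rw [hajosIncl_self, hajosIncl_of_ne hy]
      refine (mem_edgeSet _).2
        (hajosJoin_adj_inl_inr.2 (Or.inl ⟨rfl, hyz.symm, fun h => hne' ?_⟩)).symm
      rw [← h, Sym2.eq_swap]
    rw [hajosIncl_of_ne hy, hajosIncl_of_ne hz]
    exact (mem_edgeSet _).2 (hajosJoin_adj_inr_inr.2 ⟨hyz, hne'⟩)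

theorem edgeSet_hajosJoin_subset (h₃₄ : v₃ ≠ v₄) :
    (hajosJoin G₁ G₂ v₁ v₂ v₃ v₄).edgeSet ⊆ insert s(.inl v₂, hajosIncl v₁ v₃ v₄)
      (Sym2.map Sum.inl '' (G₁.edgeSet \ {s(v₁, v₂)}) ∪
        Sym2.map (hajosIncl v₁ v₃) '' (G₂.edgeSet \ {s(v₃, v₄)})) := by
  have key : ∀ x y, (hajosJoin G₁ G₂ v₁ v₂ v₃ v₄).Adj (.inl x) (.inr y) →
      s(.inl x, .inr y) ∈ insert s(.inl v₂, hajosIncl v₁ v₃ v₄)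
        (Sym2.map Sum.inl '' (G₁.edgeSet \ {s(v₁, v₂)}) ∪
          Sym2.map (hajosIncl v₁ v₃) '' (G₂.edgeSet \ {s(v₃, v₄)})) := by
    intro x y h
    rcases hajosJoin_adj_inl_inr.1 h with ⟨rfl, h, hy⟩ | ⟨rfl, hy⟩
    · refine Or.inr (Or.inr ⟨s(v₃, y), ⟨h, fun h' => hy (Sym2.congr_right.1 h')⟩, by simp⟩)
    · left
      rw [hajosIncl_of_ne h₃₄.symm]
      congr
      exact Subtype.ext hy
  intro s hs
  induction s using Sym2.ind with
  | _ a b =>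
    rcases a with x | x <;> rcases b with y | y
    · exact Or.inr (Or.inl ⟨s(x, y), hajosJoin_adj_inl_inl.1 ((mem_edgeSet _).1 hs), rfl⟩)
    · exact key x y hs
    · convert key y x hs.symm using 1
      exact Sym2.eq_swap
    · exact Or.inr (Or.inr ⟨s(x.1, y.1), hajosJoin_adj_inr_inr.1 ((mem_edgeSet _).1 hs), by simp⟩)

theorem edgeSet_hajosJoin (h₃₄ : v₃ ≠ v₄) :
    (hajosJoin G₁ G₂ v₁ v₂ v₃ v₄).edgeSet = insert s(.inl v₂, hajosIncl v₁ v₃ v₄)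
      (Sym2.map Sum.inl '' (G₁.edgeSet \ {s(v₁, v₂)}) ∪
        Sym2.map (hajosIncl v₁ v₃) '' (G₂.edgeSet \ {s(v₃, v₄)})) := by
  refine (edgeSet_hajosJoin_subset h₃₄).antisymm ?_
  rintro _ (rfl | ⟨e, he, rfl⟩ | ⟨f, hf, rfl⟩)
  · exact hajosBridge_mem_edgeSet h₃₄
  · exact map_inl_mem_edgeSet_hajosJoin he
  · exact map_hajosIncl_mem_edgeSet_hajosJoin hf

theorem ncard_edgeSet_hajosJoin [Finite V₁] [Finite V₂] (h₁₂ : G₁.Adj v₁ v₂)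
    (h₃₄ : G₂.Adj v₃ v₄) :
    (hajosJoin G₁ G₂ v₁ v₂ v₃ v₄).edgeSet.ncard + 1 = G₁.edgeSet.ncard + G₂.edgeSet.ncard := by
  have h₁ := Set.ncard_sdiff_singleton_add_one (G₁.mem_edgeSet.2 h₁₂)
  have h₂ := Set.ncard_sdiff_singleton_add_one (G₂.mem_edgeSet.2 h₃₄)
  have hbridge : s(.inl v₂, hajosIncl v₁ v₃ v₄) ∉ Sym2.map Sum.inl '' (G₁.edgeSet \ {s(v₁, v₂)}) ∪
      Sym2.map (hajosIncl v₁ v₃) '' (G₂.edgeSet \ {s(v₃, v₄)}) := by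
    rintro (⟨e, -, he⟩ | ⟨f, -, hf⟩)
    · exact map_inl_ne_hajosBridge h₃₄.ne e he
    · exact map_hajosIncl_ne_hajosBridge h₁₂.ne f hf
  have hdisj : Disjoint (Sym2.map Sum.inl '' (G₁.edgeSet \ {s(v₁, v₂)}))
      (Sym2.map (hajosIncl v₁ v₃) '' (G₂.edgeSet \ {s(v₃, v₄)})) := by
    rw [Set.disjoint_left]
    rintro _ ⟨e, -, rfl⟩ ⟨f, hf, hfe⟩
    exact map_inl_ne_map_hajosIncl e (G₂.not_isDiag_of_mem_edgeSet hf.1) hfe.symm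
  rw [edgeSet_hajosJoin h₃₄.ne, Set.ncard_insert_of_notMem hbridge, Set.ncard_union_eq hdisj,
    Set.ncard_image_of_injective _ (Sym2.map.injective Sum.inl_injective),
    Set.ncard_image_of_injective _ (Sym2.map.injective hajosIncl_injective)]
  omega

theorem neighborSet_hajosJoin_inr {y : {x : V₂ // x ≠ v₃}} (hy : y.1 ≠ v₄) :
    (hajosJoin G₁ G₂ v₁ v₂ v₃ v₄).neighborSet (.inr y) = hajosIncl v₁ v₃ '' G₂.neighborSet y := by
  ext (x | z)
  · simp [adj_comm, hajosIncl_eq_inl_iff, hy, eq_comm, and_comm]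
  · simp [hajosIncl_eq_inr_iff, hy, y.2]

theorem deg_hajosJoin_inr {y : {x : V₂ // x ≠ v₃}} (hy : y.1 ≠ v₄) :
    deg (hajosJoin G₁ G₂ v₁ v₂ v₃ v₄) (.inr y) = deg G₂ y := by
  rw [deg, neighborSet_hajosJoin_inr hy, Set.ncard_image_of_injective _ hajosIncl_injective, deg]

theorem edgeColorable_of_isProperOn_map {V W : Type*} {G : SimpleGraph V} {f : V → W}
    (hf : f.Injective) {n : ℕ} [NeZero n] {T : Sym2 W → Fin n} {m b : V}
    (hT : IsProperOn T (Sym2.map f '' (G.edgeSet \ {s(m, b)}))) {a : Fin n}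
    (ha : ∀ x ∈ G.edgeSet \ {s(m, b)}, m ∈ x ∨ b ∈ x → T (x.map f) ≠ a) :
    EdgeColorable G n := by
  classical
  refine edgeColorable_iff_exists_isProperOn.2 ⟨Function.update (T ∘ Sym2.map f) s(m, b) a,
    ((hT.comp_map hf).update_insert fun x hx _ ⟨v, hv, hvx⟩ => ha x hx ?_).mono ?_⟩
  · rw [Set.insert_sdiff_singleton]
    exact Set.subset_insert _ _
  · rcases Sym2.mem_iff.1 hv with rfl | rfl
    · exact Or.inl hvx
    · exact Or.inr hvx

-- If no edge of `G₁` at `v₁` has the colour of the new edge `v₂ v₄`, that colour can be given to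
-- `v₁ v₂`; otherwise it is missing at `v₃` and can be given to `v₃ v₄`.
theorem EdgeColorable.of_hajosJoin {n : ℕ} [NeZero n] (h₁₂ : G₁.Adj v₁ v₂) (h₃₄ : G₂.Adj v₃ v₄)
    (h : EdgeColorable (hajosJoin G₁ G₂ v₁ v₂ v₃ v₄) n) :
    EdgeColorable G₁ n ∨ EdgeColorable G₂ n := by
  obtain ⟨T, hT⟩ := edgeColorable_iff_exists_isProperOn.1 h
  rw [edgeSet_hajosJoin h₃₄.ne] at hT
  have hT₁ := hT.mono (Set.subset_union_left.trans (Set.subset_insert _ _))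
  have hT₂ := hT.mono (Set.subset_union_right.trans (Set.subset_insert _ _))
  by_cases hv₁ : ∀ x ∈ G₁.edgeSet \ {s(v₁, v₂)}, v₁ ∈ x →
      T (x.map Sum.inl) ≠ T s(.inl v₂, hajosIncl v₁ v₃ v₄)
  · refine .inl (edgeColorable_of_isProperOn_map Sum.inl_injective hT₁
      (a := T s(.inl v₂, hajosIncl v₁ v₃ v₄)) fun x hx hvx => ?_)
    rcases hvx with hvx | hvx
    · exact hv₁ x hx hvx
    · exact hT (Or.inr (Or.inl ⟨x, hx, rfl⟩)) (Or.inl rfl) (map_inl_ne_hajosBridge h₃₄.ne x)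
        ⟨.inl v₂, Sym2.mem_map.2 ⟨v₂, hvx, rfl⟩, Sym2.mem_mk_left _ _⟩
  · push Not at hv₁
    obtain ⟨x₀, hx₀, hv₁x₀, hTx₀⟩ := hv₁
    refine .inr (edgeColorable_of_isProperOn_map hajosIncl_injective hT₂
      (a := T s(.inl v₂, hajosIncl v₁ v₃ v₄)) fun y hy hvy => ?_)
    rcases hvy with hvy | hvy
    · rw [← hTx₀]
      exact hT (Or.inr (Or.inr ⟨y, hy, rfl⟩)) (Or.inr (Or.inl ⟨x₀, hx₀, rfl⟩))
        (map_inl_ne_map_hajosIncl x₀ (G₂.not_isDiag_of_mem_edgeSet hy.1)).symm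
        ⟨.inl v₁, Sym2.mem_map.2 ⟨v₃, hvy, hajosIncl_self⟩, Sym2.mem_map.2 ⟨v₁, hv₁x₀, rfl⟩⟩
    · exact hT (Or.inr (Or.inr ⟨y, hy, rfl⟩)) (Or.inl rfl) (map_hajosIncl_ne_hajosBridge h₁₂.ne y)
        ⟨hajosIncl v₁ v₃ v₄, Sym2.mem_map.2 ⟨v₄, hvy, rfl⟩, Sym2.mem_mk_right _ _⟩

open Classical in
noncomputable def hajosGlue (v₁ : V₁) (v₃ : V₂) (c₁ : Sym2 V₁ → α) (c₂ : Sym2 V₂ → α)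
    (s : Sym2 (V₁ ⊕ {x : V₂ // x ≠ v₃})) : α :=
  if s ∈ Set.range (Sym2.map Sum.inl) then c₁ (s.map (Sum.elim id fun _ => v₁))
  else c₂ (s.map (Sum.elim (fun _ => v₃) Subtype.val))

section Glue

variable {c₁ : Sym2 V₁ → α} {c₂ : Sym2 V₂ → α}

theorem hajosGlue_map_inl (e : Sym2 V₁) : hajosGlue v₁ v₃ c₁ c₂ (e.map Sum.inl) = c₁ e := by
  rw [hajosGlue, if_pos ⟨e, rfl⟩, Sym2.map_map]
  simp

theorem hajosGlue_map_hajosIncl {f : Sym2 V₂} (hf : ¬ f.IsDiag) :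
    hajosGlue v₁ v₃ c₁ c₂ (f.map (hajosIncl v₁ v₃)) = c₂ f := by
  have hret : Sum.elim (fun _ => v₃) Subtype.val ∘ hajosIncl v₁ v₃ = id := by
    funext y
    by_cases hy : y = v₃
    · simp [hy]
    · simp [hajosIncl_of_ne hy]
  rw [hajosGlue, if_neg, Sym2.map_map, hret, Sym2.map_id, id]
  rintro ⟨e, he⟩
  exact map_inl_ne_map_hajosIncl e hf he

theorem isProperOn_hajosGlue {S₁ : Set (Sym2 V₁)} {S₂ : Set (Sym2 V₂)}
    (h₁ : IsProperOn c₁ S₁) (h₂ : IsProperOn c₂ S₂) (hS₂ : S₂ ⊆ G₂.edgeSet)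
    (hv : ∀ e ∈ S₁, v₁ ∈ e → ∀ f ∈ S₂, v₃ ∈ f → c₁ e ≠ c₂ f) :
    IsProperOn (hajosGlue v₁ v₃ c₁ c₂)
      (Sym2.map Sum.inl '' S₁ ∪ Sym2.map (hajosIncl v₁ v₃) '' S₂) := by
  have hdiag : ∀ f ∈ S₂, ¬ f.IsDiag := fun f hf => G₂.not_isDiag_of_mem_edgeSet (hS₂ hf)
  refine (h₁.image Sum.inl_injective fun e _ => hajosGlue_map_inl e).union
    (h₂.image hajosIncl_injective fun f hf => hajosGlue_map_hajosIncl (hdiag f hf)) ?_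
  rintro _ ⟨e, he, rfl⟩ _ ⟨f, hf, rfl⟩ ⟨w, hwe, hwf⟩
  obtain ⟨x, hx, rfl⟩ := Sym2.mem_map.1 hwe
  obtain ⟨y, hy, hyx⟩ := Sym2.mem_map.1 hwf
  obtain ⟨rfl, rfl⟩ := hajosIncl_eq_inl_iff.1 hyx
  rw [hajosGlue_map_inl, hajosGlue_map_hajosIncl (hdiag f hf)]
  exact hv e he hx f hf hy

theorem isProperOn_update_hajosGlue [DecidableEq (V₁ ⊕ {x : V₂ // x ≠ v₃})] (h₁₂ : v₁ ≠ v₂)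
    (h₃₄ : v₃ ≠ v₄) {S₁ : Set (Sym2 V₁)} {S₂ : Set (Sym2 V₂)}
    (h₁ : IsProperOn c₁ S₁) (h₂ : IsProperOn c₂ S₂) (hS₂ : S₂ ⊆ G₂.edgeSet)
    (hv : ∀ e ∈ S₁, v₁ ∈ e → ∀ f ∈ S₂, v₃ ∈ f → c₁ e ≠ c₂ f) {δ : α}
    (hv₂ : ∀ e ∈ S₁, v₂ ∈ e → c₁ e ≠ δ) (hv₄ : ∀ f ∈ S₂, v₄ ∈ f → c₂ f ≠ δ) :
    IsProperOn (Function.update (hajosGlue v₁ v₃ c₁ c₂) s(.inl v₂, hajosIncl v₁ v₃ v₄) δ)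
      (insert s(.inl v₂, hajosIncl v₁ v₃ v₄)
        (Sym2.map Sum.inl '' S₁ ∪ Sym2.map (hajosIncl v₁ v₃) '' S₂)) := by
  refine (isProperOn_hajosGlue h₁ h₂ hS₂ hv).update_insert ?_
  rintro _ (⟨e, he, rfl⟩ | ⟨f, hf, rfl⟩) - ⟨w, hw, hw'⟩
  · obtain ⟨x, hx, rfl⟩ := Sym2.mem_map.1 hw'
    rw [hajosGlue_map_inl]
    rcases Sym2.mem_iff.1 hw with h | h
    · exact hv₂ e he (Sum.inl_injective h ▸ hx)
    · exact absurd (hajosIncl_eq_inl_iff.1 h.symm).1 h₃₄.symm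
  · obtain ⟨y, hy, rfl⟩ := Sym2.mem_map.1 hw'
    rw [hajosGlue_map_hajosIncl (G₂.not_isDiag_of_mem_edgeSet (hS₂ hf))]
    rcases Sym2.mem_iff.1 hw with h | h
    · exact absurd (hajosIncl_eq_inl_iff.1 h).2 h₁₂
    · exact hv₄ f hf (hajosIncl_injective h ▸ hy)

end Glue

section Deletion

variable [Finite V₁] [Finite V₂]

theorem edgeColorable_deleteEdges_hajosBridge (h₁₂ : G₁.Adj v₁ v₂) (h₃₄ : G₂.Adj v₃ v₄)
    (hv₁ : deg G₁ v₁ ≤ 2) (hv₃ : deg G₂ v₃ ≤ 2)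
    (hG₁ : EdgeColorable (G₁.deleteEdges {s(v₁, v₂)}) 3)
    (hG₂ : EdgeColorable (G₂.deleteEdges {s(v₃, v₄)}) 3) :
    EdgeColorable
      ((hajosJoin G₁ G₂ v₁ v₂ v₃ v₄).deleteEdges {s(.inl v₂, hajosIncl v₁ v₃ v₄)}) 3 := by
  obtain ⟨c₁, hc₁⟩ := edgeColorable_iff_exists_isProperOn.1 hG₁
  obtain ⟨c₂, hc₂⟩ := edgeColorable_iff_exists_isProperOn.1 hG₂
  rw [edgeSet_deleteEdges] at hc₁ hc₂
  obtain ⟨π, hπ⟩ := exists_perm_separating h₁₂ h₃₄ hv₁ hv₃ c₁ c₂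
  refine edgeColorable_iff_exists_isProperOn.2 ⟨_,
    (isProperOn_hajosGlue hc₁ (hc₂.comp π.injective) Set.sdiff_subset hπ).mono ?_⟩
  rw [edgeSet_deleteEdges, edgeSet_hajosJoin h₃₄.ne, Set.sdiff_singleton_subset_iff]

theorem edgeColorable_deleteEdges_hajosJoin_map_inl (h₁₂ : G₁.Adj v₁ v₂) (h₃₄ : G₂.Adj v₃ v₄)
    (hv₁ : deg G₁ v₁ ≤ 2) (hv₃ : deg G₂ v₃ ≤ 2) (hv₄ : deg G₂ v₄ ≤ 3) {e : Sym2 V₁}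
    (he : e ∈ G₁.edgeSet \ {s(v₁, v₂)}) (hG₁ : EdgeColorable (G₁.deleteEdges {e}) 3)
    (hG₂ : EdgeColorable (G₂.deleteEdges {s(v₃, v₄)}) 3) :
    EdgeColorable ((hajosJoin G₁ G₂ v₁ v₂ v₃ v₄).deleteEdges {e.map Sum.inl}) 3 := by
  classical
  have he' : s(v₁, v₂) ≠ e := Ne.symm he.2
  obtain ⟨c₁, hc₁⟩ := edgeColorable_iff_exists_isProperOn.1 hG₁
  obtain ⟨c₂, hc₂⟩ := edgeColorable_iff_exists_isProperOn.1 hG₂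
  rw [edgeSet_deleteEdges] at hc₁ hc₂
  obtain ⟨π, hπ₁, hπ₂⟩ :=
    exists_perm_of_isProperOn_deleteEdges h₁₂ h₃₄ hv₁ hv₃ hv₄ he' hc₁ c₂
  refine edgeColorable_iff_exists_isProperOn.2 ⟨_, (isProperOn_update_hajosGlue h₁₂.ne h₃₄.ne
    (hc₁.mono Set.sdiff_subset) (hc₂.comp π.injective) Set.sdiff_subset hπ₁
    (fun x hx hx₂ => hc₁ hx.1 ⟨h₁₂, he'⟩ hx.2 ⟨v₂, hx₂, Sym2.mem_mk_right _ _⟩) hπ₂).mono ?_⟩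
  rw [edgeSet_deleteEdges, edgeSet_hajosJoin h₃₄.ne]
  rintro _ ⟨rfl | ⟨x, hx, rfl⟩ | hx, hne⟩
  · exact Or.inl rfl
  · exact Or.inr (Or.inl ⟨x, ⟨⟨hx.1, fun h => hne (h ▸ rfl)⟩, hx.2⟩, rfl⟩)
  · exact Or.inr (Or.inr hx)

theorem edgeColorable_deleteEdges_hajosJoin_map_hajosIncl (h₁₂ : G₁.Adj v₁ v₂)
    (h₃₄ : G₂.Adj v₃ v₄) (hv₁ : deg G₁ v₁ ≤ 2) (hv₂ : deg G₁ v₂ ≤ 3) (hv₃ : deg G₂ v₃ ≤ 2)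
    {f : Sym2 V₂} (hf : f ∈ G₂.edgeSet \ {s(v₃, v₄)})
    (hG₁ : EdgeColorable (G₁.deleteEdges {s(v₁, v₂)}) 3)
    (hG₂ : EdgeColorable (G₂.deleteEdges {f}) 3) :
    EdgeColorable ((hajosJoin G₁ G₂ v₁ v₂ v₃ v₄).deleteEdges {f.map (hajosIncl v₁ v₃)}) 3 := by
  classical
  have hf' : s(v₃, v₄) ≠ f := Ne.symm hf.2
  obtain ⟨c₁, hc₁⟩ := edgeColorable_iff_exists_isProperOn.1 hG₁
  obtain ⟨c₂, hc₂⟩ := edgeColorable_iff_exists_isProperOn.1 hG₂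
  rw [edgeSet_deleteEdges] at hc₁ hc₂
  obtain ⟨π, hπ₁, hπ₂⟩ :=
    exists_perm_of_isProperOn_deleteEdges h₃₄ h₁₂ hv₃ hv₁ hv₂ hf' hc₂ c₁
  refine edgeColorable_iff_exists_isProperOn.2 ⟨_, (isProperOn_update_hajosGlue h₁₂.ne h₃₄.ne
    (hc₁.comp π.injective) (hc₂.mono Set.sdiff_subset) (Set.sdiff_subset.trans Set.sdiff_subset)
    (fun x hx hx₁ y hy hy₃ => (hπ₁ y hy hy₃ x hx hx₁).symm) hπ₂
    (fun y hy hy₄ => hc₂ hy.1 ⟨h₃₄, hf'⟩ hy.2 ⟨v₄, hy₄, Sym2.mem_mk_right _ _⟩)).mono ?_⟩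
  rw [edgeSet_deleteEdges, edgeSet_hajosJoin h₃₄.ne]
  rintro _ ⟨rfl | hy | ⟨y, hy, rfl⟩, hne⟩
  · exact Or.inl rfl
  · exact Or.inr (Or.inl hy)
  · exact Or.inr (Or.inr ⟨y, ⟨⟨hy.1, fun h => hne (h ▸ rfl)⟩, hy.2⟩, rfl⟩)

theorem edgeColorable_deleteEdges_hajosJoin (h₁₂ : G₁.Adj v₁ v₂) (h₃₄ : G₂.Adj v₃ v₄)
    (hv₁ : deg G₁ v₁ ≤ 2) (hv₂ : deg G₁ v₂ ≤ 3) (hv₃ : deg G₂ v₃ ≤ 2) (hv₄ : deg G₂ v₄ ≤ 3)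
    (hG₁ : ∀ e ∈ G₁.edgeSet, EdgeColorable (G₁.deleteEdges {e}) 3)
    (hG₂ : ∀ f ∈ G₂.edgeSet, EdgeColorable (G₂.deleteEdges {f}) 3) :
    ∀ d ∈ (hajosJoin G₁ G₂ v₁ v₂ v₃ v₄).edgeSet,
      EdgeColorable ((hajosJoin G₁ G₂ v₁ v₂ v₃ v₄).deleteEdges {d}) 3 := by
  intro d hd
  rw [edgeSet_hajosJoin h₃₄.ne] at hd
  rcases hd with rfl | ⟨e, he, rfl⟩ | ⟨f, hf, rfl⟩
  · exact edgeColorable_deleteEdges_hajosBridge h₁₂ h₃₄ hv₁ hv₃ (hG₁ _ h₁₂) (hG₂ _ h₃₄)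
  · exact edgeColorable_deleteEdges_hajosJoin_map_inl h₁₂ h₃₄ hv₁ hv₃ hv₄ he (hG₁ e he.1)
      (hG₂ _ h₃₄)
  · exact edgeColorable_deleteEdges_hajosJoin_map_hajosIncl h₁₂ h₃₄ hv₁ hv₂ hv₃ hf
      (hG₁ _ h₁₂) (hG₂ f hf.1)

end Deletion

end HajosJoin

section Search

variable {α : Type*}

def searchColoring (conflict : α → α → Bool) (n : ℕ) :
    List α → List (α × Fin n) → Option (List (α × Fin n))
  | [], acc => some acc
  | a :: l, acc => (List.finRange n).findSome? fun i =>
      if acc.all (fun p => !conflict a p.1 || p.2 != i) then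
        searchColoring conflict n l ((a, i) :: acc)
      else none

theorem searchColoring_isSome (conflict : α → α → Bool) {n : ℕ} (f : α → Fin n) :
    ∀ (l : List α) (acc : List (α × Fin n)),
      (∀ a ∈ l ++ acc.map Prod.fst, ∀ b ∈ l ++ acc.map Prod.fst,
        a ≠ b → conflict a b → f a ≠ f b) →
      (∀ p ∈ acc, f p.1 = p.2) → (l ++ acc.map Prod.fst).Nodup →
      (searchColoring conflict n l acc).isSome
  | [], _, _, _, _ => rfl
  | a :: l, acc, hf, hacc, hnd => by
    have hperm : List.Perm (l ++ ((a, f a) :: acc).map Prod.fst) (a :: l ++ acc.map Prod.fst) :=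
      List.perm_middle
    have hnd' := List.nodup_cons.1 hnd
    rw [searchColoring, List.isSome_findSome?, List.any_eq_true]
    refine ⟨f a, List.mem_finRange _, ?_⟩
    rw [if_pos]
    · refine searchColoring_isSome conflict f l _ (fun x hx y hy => hf x ?_ y ?_) ?_
        (hperm.nodup_iff.2 hnd)
      · exact hperm.subset hx
      · exact hperm.subset hy
      · intro p hp
        rcases List.mem_cons.1 hp with rfl | hp
        · rfl
        · exact hacc p hp
    · rw [List.all_eq_true]
      intro p hp
      have hap : a ≠ p.1 := fun h =>
        hnd'.1 (List.mem_append_right _ (h ▸ List.mem_map_of_mem hp))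
      cases hc : conflict a p.1
      · rfl
      · simpa [← hacc p hp] using
          (hf a List.mem_cons_self p.1 (List.mem_cons_of_mem _
            (List.mem_append_right _ (List.mem_map_of_mem hp))) hap hc).symm

end Search

section EdgeSearch

variable {V : Type*} [Fintype V] [DecidableEq V] {G : SimpleGraph V} {L : List (Sym2 V)}

def sharesVertex (e f : Sym2 V) : Bool :=
  decide (∃ v, v ∈ e ∧ v ∈ f)

theorem not_edgeColorable_of_searchColoring_eq_none (hL : ∀ s, s ∈ G.edgeSet ↔ s ∈ L)
    (hnd : L.Nodup) {n : ℕ} [NeZero n] (h : searchColoring sharesVertex n L [] = none) :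
    ¬ EdgeColorable G n := by
  intro hG
  obtain ⟨c, hc⟩ := edgeColorable_iff_exists_isProperOn.1 hG
  have := searchColoring_isSome sharesVertex c L []
    (fun a ha b hb hab hs => hc ((hL a).2 (by simpa using ha)) ((hL b).2 (by simpa using hb))
      hab (of_decide_eq_true hs))
    (by simp) (by simpa using hnd)
  simp [h] at this

def foundColoring (n : ℕ) [NeZero n] (L : List (Sym2 V)) (s : Sym2 V) : Fin n :=
  (((searchColoring sharesVertex n L []).getD []).lookup s).getD 0

theorem isProperOn_of_forall_mem {S : Set (Sym2 V)} (hL : ∀ s, s ∈ S ↔ s ∈ L)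
    {c : Sym2 V → α} (h : ∀ x ∈ L, ∀ y ∈ L, x ≠ y → sharesVertex x y → c x ≠ c y) :
    IsProperOn c S :=
  fun x hx y hy hxy hv => h x ((hL x).1 hx) y ((hL y).1 hy) hxy (decide_eq_true hv)

end EdgeSearch

section PStar

instance : DecidableRel PStar.Adj := fun a b =>
  inferInstanceAs (Decidable (Disjoint a.1.1 b.1.1))

def pv (a b : Fin 5) (h : ({a, b} : Finset (Fin 5)).card = 2 := by decide)
    (h' : (⟨{a, b}, h⟩ : KVert) ≠ pstarV := by decide) : PV :=
  ⟨⟨{a, b}, h⟩, h'⟩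

def pstarEdges : List (Sym2 PV) :=
  [s(pv 0 2, pv 1 3), s(pv 0 2, pv 1 4), s(pv 0 2, pv 3 4), s(pv 0 3, pv 1 2),
   s(pv 0 3, pv 1 4), s(pv 0 3, pv 2 4), s(pv 0 4, pv 1 2), s(pv 0 4, pv 1 3),
   s(pv 0 4, pv 2 3), s(pv 1 2, pv 3 4), s(pv 1 3, pv 2 4), s(pv 1 4, pv 2 3)]

theorem mem_edgeSet_PStar_iff (s : Sym2 PV) : s ∈ PStar.edgeSet ↔ s ∈ pstarEdges := by
  induction s using Sym2.ind with
  | _ x y =>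
    rw [mem_edgeSet]
    revert x y
    decide

theorem pstarEdges_nodup : pstarEdges.Nodup := by decide

theorem ncard_edgeSet_PStar : PStar.edgeSet.ncard = 12 := by
  rw [show PStar.edgeSet = ↑pstarEdges.toFinset by ext s; simp [mem_edgeSet_PStar_iff],
    Set.ncard_coe_finset, List.toFinset_card_of_nodup pstarEdges_nodup]
  rfl

theorem not_edgeColorable_PStar : ¬ EdgeColorable PStar 3 :=
  not_edgeColorable_of_searchColoring_eq_none mem_edgeSet_PStar_iff pstarEdges_nodup (by decide)

-- The search is run on each `P* - e` and its output is checked edge by edge, so only the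
-- completeness of the search, not its soundness, is ever needed.
theorem edgeColorable_deleteEdges_PStar :
    ∀ e ∈ PStar.edgeSet, EdgeColorable (PStar.deleteEdges {e}) 3 := by
  have hcheck : ∀ e ∈ pstarEdges, ∀ x ∈ pstarEdges.erase e, ∀ y ∈ pstarEdges.erase e,
      x ≠ y → sharesVertex x y →
        foundColoring 3 (pstarEdges.erase e) x ≠ foundColoring 3 (pstarEdges.erase e) y := by
    decide
  intro e he
  rw [mem_edgeSet_PStar_iff] at he
  refine edgeColorable_iff_exists_isProperOn.2
    ⟨_, isProperOn_of_forall_mem (fun s => ?_) (hcheck e he)⟩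
  rw [edgeSet_deleteEdges, Set.mem_sdiff, mem_edgeSet_PStar_iff, pstarEdges_nodup.mem_erase_iff]
  exact and_comm

def pA : PV := pv 2 4
def pB : PV := pv 0 3
def pC : PV := pv 2 3
def pD : PV := pv 0 4
def pM : PV := pv 1 2

theorem deg_eq_card_neighborFinset {V : Type*} (G : SimpleGraph V) (v : V)
    [Fintype (G.neighborSet v)] : deg G v = (G.neighborFinset v).card :=
  Set.ncard_eq_toFinset_card' _

theorem deg_PStar_pA : deg PStar pA = 2 := by rw [deg_eq_card_neighborFinset]; decide
theorem deg_PStar_pB : deg PStar pB = 3 := by rw [deg_eq_card_neighborFinset]; decide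
theorem deg_PStar_pC : deg PStar pC = 2 := by rw [deg_eq_card_neighborFinset]; decide
theorem deg_PStar_pD : deg PStar pD = 3 := by rw [deg_eq_card_neighborFinset]; decide

theorem PStar_adj_pC_pD : PStar.Adj pC pD := by decide

end PStar

section Family

def VT : ℕ → Type
  | 0 => PV
  | k + 1 => VT k ⊕ {x : PV // x ≠ pC}

instance finite_VT (k : ℕ) : Finite (VT k) := by
  induction k with
  | zero => exact inferInstanceAs (Finite PV)
  | succ k ih => exact inferInstanceAs (Finite (VT k ⊕ {x : PV // x ≠ pC}))

theorem nat_card_VT (k : ℕ) : Nat.card (VT k) = 8 * k + 9 := by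
  induction k with
  | zero =>
    show Nat.card PV = 9
    rw [Nat.card_eq_fintype_card]
    decide
  | succ k ih =>
    have h8 : Nat.card {x : PV // x ≠ pC} = 8 := by
      rw [Nat.card_eq_fintype_card]
      decide
    rw [show VT (k + 1) = (VT k ⊕ {x : PV // x ≠ pC}) from rfl, Nat.card_sum, ih, h8]
    ring

-- The vertex `y` of the most recently added copy of `P*` in `J k` (the base copy when `k = 0`).
def lastCopy : (k : ℕ) → {x : PV // x ≠ pC} → VT k
  | 0, y => y.1
  | _ + 1, y => .inr y

def A (k : ℕ) : VT k := lastCopy k ⟨pA, by decide⟩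
def B (k : ℕ) : VT k := lastCopy k ⟨pB, by decide⟩

def J : (k : ℕ) → SimpleGraph (VT k)
  | 0 => PStar
  | k + 1 => hajosJoin (J k) PStar (A k) (B k) pC pD

theorem lastCopy_injective (k : ℕ) : (lastCopy k).Injective := by
  cases k
  · exact Subtype.val_injective
  · exact Sum.inr_injective

theorem J_adj_lastCopy (k : ℕ) {y z : {x : PV // x ≠ pC}} (h : s(y.1, z.1) ≠ s(pC, pD)) :
    (J k).Adj (lastCopy k y) (lastCopy k z) ↔ PStar.Adj y z := by
  cases k with
  | zero => rfl
  | succ k => exact hajosJoin_adj_inr_inr.trans (and_iff_left h)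

theorem deg_J_lastCopy (k : ℕ) {y : {x : PV // x ≠ pC}} (hy : y.1 ≠ pD) :
    deg (J k) (lastCopy k y) = deg PStar y := by
  cases k with
  | zero => rfl
  | succ k => exact deg_hajosJoin_inr hy

theorem J_adj_A_B (k : ℕ) : (J k).Adj (A k) (B k) :=
  (J_adj_lastCopy k (by decide)).2 (by decide)

theorem deg_J_A (k : ℕ) : deg (J k) (A k) = 2 := (deg_J_lastCopy k (by decide)).trans deg_PStar_pA

theorem deg_J_B (k : ℕ) : deg (J k) (B k) = 3 := (deg_J_lastCopy k (by decide)).trans deg_PStar_pB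

theorem not_edgeColorable_J (k : ℕ) : ¬ EdgeColorable (J k) 3 := by
  induction k with
  | zero => exact not_edgeColorable_PStar
  | succ k ih => exact fun h =>
      (EdgeColorable.of_hajosJoin (J_adj_A_B k) PStar_adj_pC_pD h).elim ih not_edgeColorable_PStar

theorem edgeColorable_deleteEdges_J (k : ℕ) :
    ∀ e ∈ (J k).edgeSet, EdgeColorable ((J k).deleteEdges {e}) 3 := by
  induction k with
  | zero => exact edgeColorable_deleteEdges_PStar
  | succ k ih =>
    exact edgeColorable_deleteEdges_hajosJoin (J_adj_A_B k) PStar_adj_pC_pD (deg_J_A k).le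
      (deg_J_B k).le deg_PStar_pC.le deg_PStar_pD.le ih edgeColorable_deleteEdges_PStar

theorem ncard_edgeSet_J (k : ℕ) : (J k).edgeSet.ncard = 11 * k + 12 := by
  induction k with
  | zero => exact ncard_edgeSet_PStar
  | succ k ih =>
    have := ncard_edgeSet_hajosJoin (J_adj_A_B k) PStar_adj_pC_pD
    rw [ih, ncard_edgeSet_PStar] at this
    change (J (k + 1)).edgeSet.ncard + 1 = _ at this
    omega

-- Every vertex misses one of the two disjoint edges `A B` and `pD pM` of the last copy of `P*`,
-- and deleting that edge leaves a 3-edge-colourable graph.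
theorem deg_J_le (k : ℕ) (v : VT k) : deg (J k) v ≤ 3 := by
  by_cases hv : v ∈ s(A k, B k)
  · refine deg_le_of_edgeColorable_deleteEdges
      (e := s(lastCopy k ⟨pD, by decide⟩, lastCopy k ⟨pM, by decide⟩)) ?_
      (edgeColorable_deleteEdges_J k _ ((J_adj_lastCopy k (by decide)).2 (by decide)))
    rcases Sym2.mem_iff.1 hv with rfl | rfl <;>
    · simp only [A, B, Sym2.mem_iff, (lastCopy_injective k).eq_iff]
      decide
  · exact deg_le_of_edgeColorable_deleteEdges hv (edgeColorable_deleteEdges_J k _ (J_adj_A_B k))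

theorem isCritical_J (k : ℕ) : IsCritical 3 (J k) :=
  isCritical_of (n := 2) (deg_J_le k) (deg_J_B k) (not_edgeColorable_J k)
    (edgeColorable_deleteEdges_J k)

end Family

theorem avgDegree_eq (k : ℕ) :
    (2 * (11 * k + 12) : ℝ) / (8 * k + 9) = 2 + 3 / 4 - (3 / 4) / (8 * k + 9) := by
  field_simp
  ring

/-- For every `k` there is a 3-critical graph with `8k + 9`
vertices and `11k + 12` edges; consequently there is an infinite sequence of
3-critical graphs whose average degrees approach `2 + 3/4` from below. -/
theorem stmt_4 :
    (∀ k : ℕ, ∃ G : SimpleGraph (Fin (8 * k + 9)),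
      IsCritical 3 G ∧ G.edgeSet.ncard = 11 * k + 12) ∧
    (∀ k : ℕ, (2 * (11 * k + 12) : ℝ) / (8 * k + 9) < 2 + 3/4) ∧
    Filter.Tendsto (fun k : ℕ => (2 * (11 * k + 12) : ℝ) / (8 * k + 9))
      Filter.atTop (nhds (2 + 3/4)) := by
  refine ⟨fun k => ?_, fun k => ?_, ?_⟩
  · let φ : Fin (8 * k + 9) ≃ VT k :=
      (finCongr (nat_card_VT k)).symm.trans (Finite.equivFin _).symm
    exact ⟨(J k).comap φ, (isCritical_J k).of_iso (Iso.comap φ (J k)).symm,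
      (ncard_edgeSet_iso (Iso.comap φ (J k))).symm.trans (ncard_edgeSet_J k)⟩
  · rw [avgDegree_eq]
    have : (0 : ℝ) < (3 / 4) / (8 * k + 9) := by positivity
    linarith
  · have h : Filter.Tendsto (fun k : ℕ => 8 * (k : ℝ) + 9) Filter.atTop Filter.atTop :=
      Filter.tendsto_atTop_add_const_right _ _
        (tendsto_natCast_atTop_atTop.const_mul_atTop (by norm_num))
    simpa [avgDegree_eq] using tendsto_const_nhds.sub (tendsto_const_nhds.div_atTop h)
end

section
/- (Vizing's Adjacency Lemma) Let G be a Δ-critical graph. If u and v are vertices of G with uv ∈ E(G), then the number of neighbors of u having degree Δ is at least max{2, Δ − d(v) + 1}. -/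
/-!
Colour `G - uv` properly with `Δ` colours. Call `z` a fan vertex (at `u`) if there is a chain
`v = z₀, z₁, …, zₘ = z` of neighbours of `u` such that the colour of `u zᵢ₊₁` is missing at `zᵢ`.
Because `G` itself is not `Δ`-colourable, Vizing's recolouring arguments (shifting colours down a
fan, and swapping a two-coloured Kempe chain) show that a colour missing at a fan vertex is present
at `u`, and that no colour is missing at two distinct fan vertices. Hence the colours missing at fan
vertices label distinct edges from `u` to fan vertices other than `v`, so the numbers of missing
colours, summed over the fan, are at most `|fan| - 1`. A vertex `z` misses at least `Δ - d(z)`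
colours, and `v` misses at least `Δ - d(v) + 1` (the edge `uv` is uncoloured); so at least
`Δ - d(v) + 1` fan vertices other than `v` have degree `Δ`. When `d(v) = Δ`, `v` is one more.
-/

open Finset

theorem Relation.ReflTransGen.exists_seq {β : Type*} {r : β → β → Prop} {a b : β}
    (h : Relation.ReflTransGen r a b) :
    ∃ (f : ℕ → β) (m : ℕ), f 0 = a ∧ f m = b ∧ ∀ i < m, r (f i) (f (i + 1)) := by
  induction h with
  | refl => exact ⟨fun _ => a, 0, rfl, rfl, by simp⟩
  | @tail b c _ hbc ih =>
    obtain ⟨f, m, h0, hm, hf⟩ := ih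
    refine ⟨fun i => if i ≤ m then f i else c, m + 1, by simp [h0], by simp, fun i hi => ?_⟩
    rcases Nat.lt_succ_iff_lt_or_eq.mp hi with hi | rfl
    · simpa [hi.le, Nat.succ_le_of_lt hi] using hf i hi
    · simpa [hm] using hbc

theorem Finset.le_card_filter_of_add_sum_le {ι : Type*} {s : Finset ι} {p : ι → Prop}
    [DecidablePred p] {f : ι → ℕ} {n : ℕ} (hf : ∀ i ∈ s, ¬p i → 1 ≤ f i)
    (h : n + ∑ i ∈ s, f i ≤ #s) : n ≤ #{i ∈ s | p i} := by
  have hsplit := card_filter_add_card_filter_not (s := s) fun i => p i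
  have hnp : #{i ∈ s | ¬p i} ≤ ∑ i ∈ s, f i := calc
    #{i ∈ s | ¬p i} = ∑ i ∈ s with ¬p i, 1 := card_eq_sum_ones _
    _ ≤ ∑ i ∈ s with ¬p i, f i :=
      sum_le_sum fun i hi => hf i (mem_filter.mp hi).1 (mem_filter.mp hi).2
    _ ≤ ∑ i ∈ s, f i := sum_le_sum_of_subset (filter_subset _ _)
  omega

namespace SimpleGraph

variable {V α : Type*}

/- A connected graph on `n` vertices has at least `n - 1` edges, so its degree sum is at least
`2n - 2`. -/
theorem ConnectedComponent.card_le_two_of_degree_le_one {K : SimpleGraph V} [Fintype V]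
    [DecidableRel K.Adj] (hK : ∀ x, K.degree x ≤ 2) (C : K.ConnectedComponent) (T : Finset V)
    (hT : ∀ x ∈ T, x ∈ C ∧ K.degree x ≤ 1) : #T ≤ 2 := by
  classical
  have hedges := C.connected_toSimpleGraph.card_vert_le_card_edgeSet_add_one
  rw [Nat.card_eq_fintype_card, Nat.card_eq_fintype_card, ← edgeFinset_card,
    Fintype.card_subtype] at hedges
  set S : Finset V := {x | x ∈ C}
  have hsum : ∑ x ∈ S, K.degree x = 2 * #C.toSimpleGraph.edgeFinset := by
    rw [← sum_degrees_eq_twice_card_edges, sum_subtype S (p := (· ∈ C)) (by simp [S])]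
    refine Fintype.sum_congr _ _ fun y => ?_
    convert (degree_induce_of_neighborSet_subset fun _ hx => (C.mem_supp_congr_adj hx).mp y.2).symm
    exacts [Iff.rfl, rfl]
  have hleaves : ∑ x ∈ S, K.degree x + #T ≤ 2 * #S := by
    have hTS : S ∩ T = T := inter_eq_right.mpr fun x hx => by simpa [S] using (hT x hx).1
    rw [← hTS, ← filter_mem_eq_inter, card_filter, ← sum_add_distrib, mul_comm, ← smul_eq_mul,
      ← sum_const]
    refine sum_le_sum fun x _ => ?_
    split_ifs with hx
    · linarith [(hT x (hTS ▸ hx)).2]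
    · linarith [hK x]
  omega

theorem degree_deleteEdges_lt {G : SimpleGraph V} {x : V} {e : Sym2 V}
    [Fintype (G.neighborSet x)] [Fintype ((G.deleteEdges {e}).neighborSet x)]
    (he : e ∈ G.edgeSet) (hx : x ∈ e) : (G.deleteEdges {e}).degree x < G.degree x := by
  obtain ⟨y, rfl⟩ := Sym2.mem_iff_exists.mp hx
  simp_rw [← card_neighborSet_eq_degree]
  exact Set.card_lt_card ((Set.ssubset_iff_of_subset fun w hw => deleteEdges_le _ hw).mpr
    ⟨y, he, fun h => (deleteEdges_adj.mp h).2 (Set.mem_singleton _)⟩)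

section EdgeColoring

variable {H H' : SimpleGraph V} {c : Sym2 V → α} {x y x₀ : V} {a b d : α}

/- Colourings are total functions on `Sym2 V`; only their values on edges of `H` matter. -/
def IsProperEdgeColoring (H : SimpleGraph V) (c : Sym2 V → α) : Prop :=
  ∀ ⦃x y z⦄, H.Adj x y → H.Adj x z → c s(x, y) = c s(x, z) → y = z

def IsMissingColor (H : SimpleGraph V) (c : Sym2 V → α) (x : V) (a : α) : Prop :=
  ∀ y, H.Adj x y → c s(x, y) ≠ a

theorem IsProperEdgeColoring.mono (hc : H'.IsProperEdgeColoring c) (h : H ≤ H') :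
    H.IsProperEdgeColoring c :=
  fun _ _ _ hy hz => hc (h hy) (h hz)

theorem IsMissingColor.mono (ha : H'.IsMissingColor c x a) (h : H ≤ H') :
    H.IsMissingColor c x a :=
  fun y hy => ha y (h hy)

theorem IsProperEdgeColoring.update [DecidableEq V] {e : Sym2 V}
    (hc : (H.deleteEdges {e}).IsProperEdgeColoring c)
    (ha : ∀ x ∈ e, (H.deleteEdges {e}).IsMissingColor c x a) :
    H.IsProperEdgeColoring (Function.update c e a) := by
  have key : ∀ ⦃x y z⦄, H.Adj x z → s(x, y) = e → s(x, z) ≠ e →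
      Function.update c e a s(x, y) ≠ Function.update c e a s(x, z) := by
    intro x y z hxz hy hz
    rw [hy, Function.update_self, Function.update_of_ne hz]
    exact (ha x (hy ▸ Sym2.mem_mk_left x y) z (by simpa [hz] using hxz)).symm
  intro x y z hxy hxz h
  by_cases hy : s(x, y) = e <;> by_cases hz : s(x, z) = e
  · exact Sym2.congr_right.mp (hy.trans hz.symm)
  · exact absurd h (key hxz hy hz)
  · exact absurd h.symm (key hxy hz hy)
  · rw [Function.update_of_ne hy, Function.update_of_ne hz] at h
    exact hc (by simpa [hy] using hxy) (by simpa [hz] using hxz) h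

theorem isMissingColor_update_iff_of_notMem [DecidableEq V] {e : Sym2 V} (hx : x ∉ e) :
    H.IsMissingColor (Function.update c e a) x b ↔ H.IsMissingColor c x b := by
  refine forall₂_congr fun y _ => ?_
  rw [Function.update_of_ne (by rintro rfl; exact hx (Sym2.mem_mk_left x y))]

theorem IsProperEdgeColoring.isMissingColor_update_self [DecidableEq V]
    (hc : H.IsProperEdgeColoring c) (hxy : H.Adj x y) (ha : a ≠ c s(x, y)) :
    H.IsMissingColor (Function.update c s(x, y) a) x (c s(x, y)) := by
  intro z hxz
  by_cases hzy : z = y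
  · rwa [hzy, Function.update_self]
  · rw [Function.update_of_ne (Sym2.congr_right.not.mpr hzy)]
    exact fun h => hzy (hc hxz hxy h)

open Classical in
theorem card_sub_degree_le_card_isMissingColor [Fintype α] [Fintype (H.neighborSet x)] :
    Fintype.card α - H.degree x ≤ #{a | H.IsMissingColor c x a} := by
  have hpresent : #{a | ¬H.IsMissingColor c x a} ≤ H.degree x := by
    refine (card_le_card fun a ha => ?_).trans (card_image_le (f := fun y => c s(x, y)))
    simp only [IsMissingColor, not_forall, not_not, mem_filter, mem_univ, true_and] at ha
    obtain ⟨y, hy, rfl⟩ := ha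
    exact mem_image_of_mem _ ((mem_neighborFinset _ _ _).mpr hy)
  have := card_filter_add_card_filter_not (s := univ) fun a => H.IsMissingColor c x a
  rw [card_univ] at this
  omega

def kempeGraph (H : SimpleGraph V) (c : Sym2 V → α) (a b : α) : SimpleGraph V where
  Adj x y := H.Adj x y ∧ (c s(x, y) = a ∨ c s(x, y) = b)
  symm := ⟨fun _ _ h => ⟨h.1.symm, Sym2.eq_swap ▸ h.2⟩⟩
  loopless := ⟨fun x h => H.loopless.irrefl x h.1⟩

theorem IsProperEdgeColoring.degree_kempeGraph_le
    [Fintype ((H.kempeGraph c a b).neighborSet x)] (hc : H.IsProperEdgeColoring c)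
    (S : Finset α) (hS : ∀ y, (H.kempeGraph c a b).Adj x y → c s(x, y) ∈ S) :
    (H.kempeGraph c a b).degree x ≤ #S := by
  refine card_le_card_of_injOn (fun y => c s(x, y)) (fun y hy => hS y ?_) fun y hy z hz h => ?_
  · exact (mem_neighborFinset _ _ _).mp hy
  · exact hc ((mem_neighborFinset _ _ _).mp hy).1 ((mem_neighborFinset _ _ _).mp hz).1 h

theorem IsProperEdgeColoring.degree_kempeGraph_le_two
    [Fintype ((H.kempeGraph c a b).neighborSet x)] (hc : H.IsProperEdgeColoring c) :
    (H.kempeGraph c a b).degree x ≤ 2 := by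
  classical
  exact (hc.degree_kempeGraph_le {a, b} fun _ hy => by simpa using hy.2).trans card_le_two

theorem IsProperEdgeColoring.degree_kempeGraph_le_one
    [Fintype ((H.kempeGraph c a b).neighborSet x)] (hc : H.IsProperEdgeColoring c)
    (hx : H.IsMissingColor c x a ∨ H.IsMissingColor c x b) :
    (H.kempeGraph c a b).degree x ≤ 1 := by
  rcases hx with hx | hx
  · exact hc.degree_kempeGraph_le {b} fun y hy => by simpa [hx y hy.1] using hy.2
  · exact hc.degree_kempeGraph_le {a} fun y hy => by simpa [hx y hy.1] using hy.2

open Classical in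
noncomputable def kempeSwap [DecidableEq α] (H : SimpleGraph V) (c : Sym2 V → α) (a b : α)
    (x₀ : V) : Sym2 V → α :=
  fun e => if ∃ x ∈ e, (H.kempeGraph c a b).Reachable x₀ x then Equiv.swap a b (c e) else c e

variable [DecidableEq α]

theorem kempeSwap_apply_of_reachable (hx : (H.kempeGraph c a b).Reachable x₀ x) (y : V) :
    H.kempeSwap c a b x₀ s(x, y) = Equiv.swap a b (c s(x, y)) :=
  if_pos ⟨x, Sym2.mem_mk_left x y, hx⟩

theorem kempeSwap_apply_of_not_reachable (hx : ¬(H.kempeGraph c a b).Reachable x₀ x)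
    (hxy : H.Adj x y) : H.kempeSwap c a b x₀ s(x, y) = c s(x, y) := by
  unfold kempeSwap
  split_ifs with h
  · obtain ⟨w, hw, hrw⟩ := h
    rcases Sym2.mem_iff.mp hw with rfl | rfl
    · exact absurd hrw hx
    · have hab : c s(x, w) ≠ a ∧ c s(x, w) ≠ b := by
        refine not_or.mp fun hcol => hx (hrw.trans (Adj.reachable ⟨hxy.symm, ?_⟩))
        rwa [Sym2.eq_swap]
      exact Equiv.swap_apply_of_ne_of_ne hab.1 hab.2
  · rfl

theorem IsProperEdgeColoring.kempeSwap (hc : H.IsProperEdgeColoring c) :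
    H.IsProperEdgeColoring (H.kempeSwap c a b x₀) := by
  intro x y z hxy hxz h
  by_cases hx : (H.kempeGraph c a b).Reachable x₀ x
  · rw [kempeSwap_apply_of_reachable hx, kempeSwap_apply_of_reachable hx] at h
    exact hc hxy hxz ((Equiv.swap a b).injective h)
  · rw [kempeSwap_apply_of_not_reachable hx hxy, kempeSwap_apply_of_not_reachable hx hxz] at h
    exact hc hxy hxz h

theorem isMissingColor_kempeSwap_iff_of_reachable (hx : (H.kempeGraph c a b).Reachable x₀ x) :
    H.IsMissingColor (H.kempeSwap c a b x₀) x d ↔ H.IsMissingColor c x (Equiv.swap a b d) := by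
  refine forall₂_congr fun y _ => ?_
  rw [kempeSwap_apply_of_reachable hx, Ne, Equiv.swap_apply_eq_iff]

theorem isMissingColor_kempeSwap_iff_of_not_reachable
    (hx : ¬(H.kempeGraph c a b).Reachable x₀ x) :
    H.IsMissingColor (H.kempeSwap c a b x₀) x d ↔ H.IsMissingColor c x d :=
  forall₂_congr fun _ hy => by rw [kempeSwap_apply_of_not_reachable hx hy]

end EdgeColoring

section Fan

variable {H : SimpleGraph V} {c : Sym2 V → α} {u v : V} {a b : α}

/- The fan vertices at `u` are the vertices reachable from `v` by `H.IsFanStep c u`. -/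
def IsFanStep (H : SimpleGraph V) (c : Sym2 V → α) (u x y : V) : Prop :=
  H.Adj u y ∧ H.IsMissingColor c x (c s(u, y))

def NoCommonMissingColor (H : SimpleGraph V) (α : Type*) (u v : V) : Prop :=
  ∀ c : Sym2 V → α, H.IsProperEdgeColoring c →
    ∀ a, H.IsMissingColor c u a → ¬H.IsMissingColor c v a

theorem noCommonMissingColor_deleteEdges {G : SimpleGraph V}
    (hG : ∀ c : Sym2 V → α, ¬G.IsProperEdgeColoring c) :
    (G.deleteEdges {s(u, v)}).NoCommonMissingColor α u v := by
  classical
  intro c hc a hu hv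
  refine hG _ (hc.update (a := a) fun x hx => ?_)
  rcases Sym2.mem_iff.mp hx with rfl | rfl
  exacts [hu, hv]

theorem ne_of_isFanStep {z : ℕ → V} {m : ℕ} (huv : u ≠ v) (h0 : z 0 = v)
    (hz : ∀ i < m, H.IsFanStep c u (z i) (z (i + 1))) : ∀ i ≤ m, z i ≠ u
  | 0, _ => h0 ▸ huv.symm
  | i + 1, hi => (hz i hi).1.ne'

/- Shift the colours down the fan: recolouring `u zₘ` with `a` frees its old colour at `u`,
and that colour is missing at `zₘ₋₁`. A repeated vertex just shortens the fan. -/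
theorem NoCommonMissingColor.not_isMissingColor_of_fan (hH : H.NoCommonMissingColor α u v)
    (huv : u ≠ v) {z : ℕ → V} (h0 : z 0 = v) {m : ℕ} (hc : H.IsProperEdgeColoring c)
    (hz : ∀ i < m, H.IsFanStep c u (z i) (z (i + 1))) (hzm : H.IsMissingColor c (z m) a) :
    ¬H.IsMissingColor c u a := by
  classical
  induction m using Nat.strong_induction_on generalizing c a with
  | _ m ih =>
  intro hu
  by_cases hrep : ∃ i < m, z i = z m
  · obtain ⟨i, hi, hzi⟩ := hrep
    exact ih i hi hc (fun j hj => hz j (hj.trans hi)) (hzi ▸ hzm) hu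
  push Not at hrep
  cases m with
  | zero => exact hH c hc a hu (h0 ▸ hzm)
  | succ k =>
    obtain ⟨hadj, hmiss⟩ := hz k k.lt_succ_self
    set e := s(u, z (k + 1))
    have hnotMem (i : ℕ) (hi : i ≤ k) : z i ∉ e := fun h => by
      rcases Sym2.mem_iff.mp h with h | h
      exacts [ne_of_isFanStep huv h0 hz i (by omega) h, hrep i (by omega) h]
    have hc' : H.IsProperEdgeColoring (Function.update c e a) := by
      refine IsProperEdgeColoring.update (hc.mono (deleteEdges_le _)) fun x hx => ?_
      rcases Sym2.mem_iff.mp hx with rfl | rfl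
      exacts [hu.mono (deleteEdges_le _), hzm.mono (deleteEdges_le _)]
    refine ih k k.lt_succ_self hc' (fun i hi => ⟨(hz i (by omega)).1, ?_⟩)
      ((isMissingColor_update_iff_of_notMem (hnotMem k le_rfl)).mpr hmiss)
      (hc.isMissingColor_update_self hadj fun h => hu _ hadj h.symm)
    rw [isMissingColor_update_iff_of_notMem (hnotMem i hi.le),
      Function.update_of_ne (Sym2.congr_right.not.mpr (hrep (i + 1) (by omega)))]
    exact (hz i (by omega)).2

theorem IsFanStep.kempeSwap_or [DecidableEq α] {x y x₀ : V} (hxy : H.IsFanStep c u x y)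
    (hu : H.IsMissingColor c u a) (hr : ¬(H.kempeGraph c a b).Reachable x₀ u) :
    H.IsFanStep (H.kempeSwap c a b x₀) u x y ∨
      (H.kempeGraph c a b).Reachable x₀ x ∧ H.IsMissingColor c x b := by
  obtain ⟨hadj, hmiss⟩ := hxy
  have hcol := kempeSwap_apply_of_not_reachable hr hadj
  by_cases hx : (H.kempeGraph c a b).Reachable x₀ x
  · by_cases hb : c s(u, y) = b
    · exact Or.inr ⟨hx, hb ▸ hmiss⟩
    · refine Or.inl ⟨hadj, ?_⟩
      rwa [hcol, isMissingColor_kempeSwap_iff_of_reachable hx,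
        Equiv.swap_apply_of_ne_of_ne (hu y hadj) hb]
  · exact Or.inl ⟨hadj, by rwa [hcol, isMissingColor_kempeSwap_iff_of_not_reachable hx]⟩

/- If `u` were off the Kempe chain through `zₘ`, swap `a` and `b` on that chain. Then `a` is missing
at `zₘ` and at `u`, so by the shifting lemma the fan breaks, which can only happen at an earlier
fan vertex that lies on the same chain and misses `b`. -/
theorem NoCommonMissingColor.kempeGraph_reachable_of_fan (hH : H.NoCommonMissingColor α u v)
    (huv : u ≠ v) {z : ℕ → V} (h0 : z 0 = v) {m : ℕ} (hc : H.IsProperEdgeColoring c)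
    (hz : ∀ i < m, H.IsFanStep c u (z i) (z (i + 1))) (hzm : H.IsMissingColor c (z m) b)
    (hu : H.IsMissingColor c u a) : (H.kempeGraph c a b).Reachable (z m) u := by
  classical
  induction m using Nat.strong_induction_on with
  | _ m ih =>
  by_contra hr
  have hu' := (isMissingColor_kempeSwap_iff_of_not_reachable hr).mpr hu
  have hzm' : H.IsMissingColor (H.kempeSwap c a b (z m)) (z m) a := by
    rwa [isMissingColor_kempeSwap_iff_of_reachable Reachable.rfl, Equiv.swap_apply_left]
  by_cases hfan : ∀ i < m, H.IsFanStep (H.kempeSwap c a b (z m)) u (z i) (z (i + 1))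
  · exact hH.not_isMissingColor_of_fan huv h0 hc.kempeSwap hfan hzm' hu'
  push Not at hfan
  obtain ⟨i, hi, hstep⟩ := hfan
  obtain ⟨hri, hmi⟩ := ((hz i hi).kempeSwap_or hu hr).resolve_left hstep
  exact hr (hri.trans (ih i hi (fun j hj => hz j (hj.trans hi)) hmi))

/- Otherwise `u`, `z₁` and `z₂` would be three vertices of degree at most one in a single component
of the `(a, b)`-Kempe graph. -/
theorem NoCommonMissingColor.eq_of_isMissingColor [Fintype V]
    (hH : H.NoCommonMissingColor α u v) (huv : u ≠ v) (hc : H.IsProperEdgeColoring c)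
    (hu : H.IsMissingColor c u a) {z₁ z₂ : V}
    (hz₁ : Relation.ReflTransGen (H.IsFanStep c u) v z₁)
    (hz₂ : Relation.ReflTransGen (H.IsFanStep c u) v z₂)
    (h₁ : H.IsMissingColor c z₁ b) (h₂ : H.IsMissingColor c z₂ b) : z₁ = z₂ := by
  classical
  set K := H.kempeGraph c a b
  have hfan {z : V} (hz : Relation.ReflTransGen (H.IsFanStep c u) v z)
      (hzb : H.IsMissingColor c z b) : z ≠ u ∧ z ∈ K.connectedComponentMk u := by
    obtain ⟨f, m, h0, rfl, hf⟩ := hz.exists_seq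
    exact ⟨ne_of_isFanStep huv h0 hf m le_rfl,
      ConnectedComponent.sound (hH.kempeGraph_reachable_of_fan huv h0 hc hf hzb hu)⟩
  by_contra hne
  have hT := ConnectedComponent.card_le_two_of_degree_le_one
    (fun _ => hc.degree_kempeGraph_le_two) (K.connectedComponentMk u) {u, z₁, z₂} (by
      simp only [mem_insert, mem_singleton, forall_eq_or_imp, forall_eq]
      exact ⟨⟨rfl, hc.degree_kempeGraph_le_one (.inl hu)⟩,
        ⟨(hfan hz₁ h₁).2, hc.degree_kempeGraph_le_one (.inr h₁)⟩,
        ⟨(hfan hz₂ h₂).2, hc.degree_kempeGraph_le_one (.inr h₂)⟩⟩)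
  rw [card_eq_three.mpr ⟨u, z₁, z₂, (hfan hz₁ h₁).1.symm, (hfan hz₂ h₂).1.symm, hne, rfl⟩] at hT
  omega

open Classical in
theorem NoCommonMissingColor.sum_card_isMissingColor_le [Fintype V] [Fintype α]
    (hH : H.NoCommonMissingColor α u v) (huv : u ≠ v) (hv : ¬H.Adj u v)
    (hc : H.IsProperEdgeColoring c) (hu : H.IsMissingColor c u a) :
    ∑ z ∈ {z | Relation.ReflTransGen (H.IsFanStep c u) v z}, #{d | H.IsMissingColor c z d} ≤
      #(({z | Relation.ReflTransGen (H.IsFanStep c u) v z} : Finset V).erase v) := by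
  set Z : Finset V := {z | Relation.ReflTransGen (H.IsFanStep c u) v z}
  have hdisj : (Z : Set V).PairwiseDisjoint
      fun z => ({d | H.IsMissingColor c z d} : Finset α) := by
    intro z₁ hz₁ z₂ hz₂ hne
    refine disjoint_filter.mpr fun d _ h₁ h₂ => hne ?_
    simp only [Z, coe_filter, mem_univ, true_and, Set.mem_ofPred_eq] at hz₁ hz₂
    exact hH.eq_of_isMissingColor huv hc hu hz₁ hz₂ h₁ h₂
  rw [← card_biUnion hdisj]
  refine card_le_card_of_surjOn (fun y => c s(u, y)) fun d hd => ?_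
  obtain ⟨z, hz, hzd⟩ := mem_biUnion.mp hd
  simp only [Z, mem_filter, mem_univ, true_and] at hz hzd
  obtain ⟨f, m, h0, rfl, hf⟩ := hz.exists_seq
  have hud := hH.not_isMissingColor_of_fan huv h0 hc hf hzd
  simp only [IsMissingColor, not_forall, not_not] at hud
  obtain ⟨y, hy, hyd⟩ := hud
  exact ⟨y, mem_erase.mpr ⟨fun h => hv (h ▸ hy), by simpa [Z] using hz.tail ⟨hy, hyd ▸ hzd⟩⟩, hyd⟩

end Fan

theorem exists_finset_adj_degree_eq {G : SimpleGraph V} {c : Sym2 V → α} {u v : V}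
    [Fintype V] [DecidableRel G.Adj] [Fintype α]
    (hk : ∀ x, G.degree x ≤ Fintype.card α) (hG : ∀ c : Sym2 V → α, ¬G.IsProperEdgeColoring c)
    (huv : G.Adj u v) (hc : (G.deleteEdges {s(u, v)}).IsProperEdgeColoring c) :
    ∃ D : Finset V, v ∉ D ∧ (∀ z ∈ D, G.Adj u z ∧ G.degree z = Fintype.card α) ∧
      Fintype.card α - G.degree v + 1 ≤ #D := by
  classical
  set H := G.deleteEdges {s(u, v)}
  have hmiss (x : V) := card_sub_degree_le_card_isMissingColor (H := H) (c := c) (x := x)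
  have hHG (x : V) : H.degree x ≤ G.degree x := degree_le_of_le (deleteEdges_le _)
  have hHu : H.degree u < G.degree u := degree_deleteEdges_lt huv (Sym2.mem_mk_left u v)
  have hHv : H.degree v < G.degree v := degree_deleteEdges_lt huv (Sym2.mem_mk_right u v)
  obtain ⟨a, ha⟩ : ∃ a, H.IsMissingColor c u a := by
    have := hmiss u
    have := hk u
    obtain ⟨a, ha⟩ := card_pos.mp (by omega : 0 < #{a | H.IsMissingColor c u a})
    exact ⟨a, (mem_filter.mp ha).2⟩
  set Z : Finset V := {z | Relation.ReflTransGen (H.IsFanStep c u) v z}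
  have hsum : ∑ z ∈ Z, #{a | H.IsMissingColor c z a} ≤ #(Z.erase v) :=
    (noCommonMissingColor_deleteEdges hG).sum_card_isMissingColor_le huv.ne (by simp) hc ha
  refine ⟨{z ∈ Z.erase v | G.degree z = Fintype.card α}, by simp, fun z hz => ?_, ?_⟩
  · simp only [Z, mem_filter, mem_erase, mem_univ, true_and] at hz
    obtain ⟨⟨hzv, hz⟩, hdeg⟩ := hz
    rcases hz.cases_tail with rfl | ⟨w, -, hw⟩
    · exact absurd rfl hzv
    · exact ⟨deleteEdges_le _ hw.1, hdeg⟩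
  · refine le_card_filter_of_add_sum_le (f := fun z => #{a | H.IsMissingColor c z a})
      (fun z _ hz => ?_) ?_
    · have := hmiss z
      have := hHG z
      have := hk z
      omega
    · rw [← add_sum_erase Z _ (mem_filter.mpr ⟨mem_univ v, .refl⟩)] at hsum
      have := hmiss v
      have := hk v
      omega

theorem IsProperEdgeColoring.edgeColorable {G : SimpleGraph V} {n : ℕ} {c : Sym2 V → Fin n}
    (hc : G.IsProperEdgeColoring c) : EdgeColorable G n := by
  refine ⟨fun e => c e, fun ⟨e₁, he₁⟩ ⟨e₂, he₂⟩ hne ⟨x, hx₁, hx₂⟩ h => hne ?_⟩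
  obtain ⟨y₁, rfl⟩ := Sym2.mem_iff_exists.mp hx₁
  obtain ⟨y₂, rfl⟩ := Sym2.mem_iff_exists.mp hx₂
  exact Subtype.ext (Sym2.congr_right.mpr (hc (G.mem_edgeSet.mp he₁) (G.mem_edgeSet.mp he₂) h))

end SimpleGraph

open SimpleGraph

theorem EdgeColorable.exists_isProperEdgeColoring {V : Type*} {G : SimpleGraph V} {n : ℕ}
    [NeZero n] (h : EdgeColorable G n) : ∃ c : Sym2 V → Fin n, G.IsProperEdgeColoring c := by
  classical
  obtain ⟨C, hC⟩ := h
  refine ⟨fun e => if he : e ∈ G.edgeSet then C ⟨e, he⟩ else 0, fun x y z hxy hxz h => ?_⟩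
  by_contra hyz
  dsimp only at h
  rw [dif_pos (G.mem_edgeSet.mpr hxy), dif_pos (G.mem_edgeSet.mpr hxz)] at h
  exact hC _ _ (fun he => hyz (Sym2.congr_right.mp (congrArg Subtype.val he)))
    ⟨x, Sym2.mem_mk_left x y, Sym2.mem_mk_left x z⟩ h

theorem deg_eq_degree {V : Type*} (G : SimpleGraph V) [Fintype V] [DecidableRel G.Adj] (x : V) :
    deg G x = G.degree x := by
  rw [deg, Set.ncard_eq_toFinset_card', ← card_neighborFinset_eq_degree, neighborFinset_def]

theorem IsCritical.not_isProperEdgeColoring {V : Type*} {G : SimpleGraph V} {k : ℕ}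
    (hG : IsCritical k G) (c : Sym2 V → Fin k) : ¬G.IsProperEdgeColoring c := fun hc => by
  have hχ : chromIndex G = k + 1 := hG.2.2.1
  have := Nat.sInf_le (s := {n | EdgeColorable G n}) hc.edgeColorable
  rw [← chromIndex, hχ] at this
  omega

theorem IsCritical.exists_isProperEdgeColoring_deleteEdges {V : Type*} {G : SimpleGraph V}
    {k : ℕ} [NeZero k] (hG : IsCritical k G) {e : Sym2 V} (he : e ∈ G.edgeSet) :
    ∃ c : Sym2 V → Fin k, (G.deleteEdges {e}).IsProperEdgeColoring c := by
  have hχ : chromIndex (G.deleteEdges {e}) = k := hG.2.2.2 e he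
  rw [chromIndex] at hχ
  have hne : {n | EdgeColorable (G.deleteEdges {e}) n}.Nonempty :=
    Nat.nonempty_of_pos_sInf (hχ ▸ Nat.pos_of_ne_zero (NeZero.ne k))
  exact (hχ ▸ Nat.sInf_mem hne : EdgeColorable (G.deleteEdges {e}) k).exists_isProperEdgeColoring

theorem stmt_5_general {V : Type} [Fintype V] (Δ : ℕ)
    (G : SimpleGraph V) (hG : IsCritical Δ G) (u v : V) (huv : G.Adj u v) :
    max 2 (Δ - deg G v + 1) ≤ (G.neighborSet u ∩ {w | deg G w = Δ}).ncard := by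
  classical
  have hmax (x : V) : G.degree x ≤ Δ := deg_eq_degree G x ▸ hG.1 x
  have : NeZero Δ := ⟨((G.degree_pos_iff_exists_adj u).mpr ⟨v, huv⟩).trans_le (hmax u) |>.ne'⟩
  obtain ⟨c, hc⟩ := hG.exists_isProperEdgeColoring_deleteEdges (e := s(u, v)) huv
  obtain ⟨D, hvD, hD, hcard⟩ :=
    exists_finset_adj_degree_eq (by simpa using hmax) hG.not_isProperEdgeColoring huv hc
  simp only [Fintype.card_fin] at hD hcard
  simp only [deg_eq_degree]
  set N := G.neighborSet u ∩ {w | G.degree w = Δ}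
  have hcard_le {D' : Finset V} (h : ↑D' ⊆ N) : #D' ≤ N.ncard := by
    rw [← Set.ncard_coe_finset]
    exact Set.ncard_le_ncard h (Set.toFinite _)
  have hDN : ↑D ⊆ N := fun z hz => hD z hz
  refine max_le ?_ (hcard.trans (hcard_le hDN))
  rcases (hmax v).lt_or_eq with hlt | heq
  · have := hcard_le hDN
    omega
  · have := hcard_le (D' := insert v D) (by rw [coe_insert]; exact Set.insert_subset ⟨huv, heq⟩ hDN)
    rw [card_insert_of_notMem hvD] at this
    omega

/-- Vizing's Adjacency Lemma: If `G` is `Δ`-critical and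
`uv ∈ E(G)`, then `u` has at least `max 2 (Δ - d(v) + 1)` neighbors of
degree `Δ`. -/
theorem stmt_5 {V : Type} [Fintype V] (Δ : ℕ) (hΔ : 2 ≤ Δ)
    (G : SimpleGraph V) (hG : IsCritical Δ G) (u v : V) (huv : G.Adj u v) :
    max 2 (Δ - deg G v + 1) ≤ (G.neighborSet u ∩ {w | deg G w = Δ}).ncard :=
  stmt_5_general Δ G hG u v huv
end
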